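/- arXiv:1801.05732 — 4 statements merged into one kernel-verified Lean document; each statement's English description precedes it below -/
import Mathlib

section
/- Let 𝒜 = (a_{ij}) be a k × n matrix with integer entries such that 𝒜 has rank k (equivalently, its rows are linearly independent over ℚ) and every column of 𝒜 has at most one positive entry. For i = 1, …, k set f_i = ∏_{j=1}^n x_j^{a_{ij}^+} − ∏_{j=1}^n x_j^{a_{ij}^-} in ℂ[x₁, …, x_n]. Then f₁, …, f_k is a regular sequence in ℂ[x₁, …, x_n]. -/
open MvPolynomial

namespace FS

open scoped Classical

variable {k n : ℕ} (a : Fin k → Fin n → ℤ)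

noncomputable def pos (i : Fin k) : Fin n →₀ ℕ :=
  Finsupp.equivFunOnFinite.symm fun j => (a i j).toNat

noncomputable def neg (i : Fin k) : Fin n →₀ ℕ :=
  Finsupp.equivFunOnFinite.symm fun j => (-(a i j)).toNat

@[simp] lemma pos_apply (i : Fin k) (j : Fin n) : pos a i j = (a i j).toNat := rfl
@[simp] lemma neg_apply (i : Fin k) (j : Fin n) : neg a i j = (-(a i j)).toNat := rfl

noncomputable def fb (i : Fin k) : MvPolynomial (Fin n) ℂ :=
  monomial (pos a i) 1 - monomial (neg a i) 1

noncomputable def Jid (S : Finset (Fin k)) (M : Set (Fin n →₀ ℕ)) :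
    Ideal (MvPolynomial (Fin n) ℂ) :=
  Ideal.span ((fb a '' ↑S) ∪ ((fun m => (monomial m (1:ℂ) : MvPolynomial (Fin n) ℂ)) '' M))

lemma fb_mem_Jid {S : Finset (Fin k)} {M : Set (Fin n →₀ ℕ)} {i : Fin k} (hi : i ∈ S) :
    fb a i ∈ Jid a S M :=
  Ideal.subset_span (Set.mem_union_left _ ⟨i, by simpa using hi, rfl⟩)

lemma monomial_mem_Jid {S : Finset (Fin k)} {M : Set (Fin n →₀ ℕ)} {m : Fin n →₀ ℕ}
    (hm : m ∈ M) : (monomial m (1:ℂ) : MvPolynomial (Fin n) ℂ) ∈ Jid a S M :=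
  Ideal.subset_span (Set.mem_union_right _ ⟨m, hm, rfl⟩)

lemma Jid_mono {S S' : Finset (Fin k)} {M : Set (Fin n →₀ ℕ)} (h : S ⊆ S') :
    Jid a S M ≤ Jid a S' M :=
  Ideal.span_mono (Set.union_subset_union_left _ (Set.image_mono (by exact_mod_cast h)))

lemma mul_fb (c : Fin n →₀ ℕ) (i : Fin k) :
    monomial c (1:ℂ) * fb a i
      = monomial (c + pos a i) 1 - monomial (c + neg a i) 1 := by
  rw [fb, mul_sub, monomial_mul, monomial_mul, one_mul]



variable {n : ℕ}

/-- Sum of coefficients of `g` over exponents satisfying `Q`. -/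
noncomputable def lamAux (Q : (Fin n →₀ ℕ) → Prop) (g : MvPolynomial (Fin n) ℂ) : ℂ :=
  ∑ c ∈ g.support, if Q c then g.coeff c else 0

lemma lamAux_eq_sum_superset' (Q : (Fin n →₀ ℕ) → Prop) {g : MvPolynomial (Fin n) ℂ}
    {T : Finset (Fin n →₀ ℕ)} (hT : g.support ⊆ T) :
    lamAux Q g = ∑ c ∈ T, if Q c then g.coeff c else 0 := by
  unfold lamAux
  refine Finset.sum_subset hT ?_
  intro c _ hc
  simp [MvPolynomial.notMem_support_iff.mp hc]

lemma lamAux_add (Q : (Fin n →₀ ℕ) → Prop) (g h : MvPolynomial (Fin n) ℂ) :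
    lamAux Q (g + h) = lamAux Q g + lamAux Q h := by
  rw [lamAux_eq_sum_superset' Q (T := g.support ∪ h.support ∪ (g+h).support) (by intro x hx; simp [hx]),
    lamAux_eq_sum_superset' Q (g := g) (T := g.support ∪ h.support ∪ (g+h).support) (by intro x hx; simp [hx]),
    lamAux_eq_sum_superset' Q (g := h) (T := g.support ∪ h.support ∪ (g+h).support) (by intro x hx; simp [hx]),
    ← Finset.sum_add_distrib]
  refine Finset.sum_congr rfl fun c _ => ?_
  by_cases hQ : Q c <;> simp [hQ, coeff_add]

lemma lamAux_monomial (Q : (Fin n →₀ ℕ) → Prop) (c : Fin n →₀ ℕ) (r : ℂ) :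
    lamAux Q (monomial c r) = if Q c then r else 0 := by
  by_cases hr : r = 0
  · simp [lamAux, hr]
  · rw [lamAux_eq_sum_superset' Q (T := {c}) (by simp [support_monomial, hr])]
    simp

lemma lamAux_neg (Q : (Fin n →₀ ℕ) → Prop) (g : MvPolynomial (Fin n) ℂ) :
    lamAux Q (-g) = - lamAux Q g := by
  have := lamAux_add Q g (-g)
  simp only [add_neg_cancel] at this
  have h0 : lamAux Q 0 = 0 := by simp [lamAux]
  rw [h0] at this
  linear_combination -this

lemma lamAux_sub (Q : (Fin n →₀ ℕ) → Prop) (g h : MvPolynomial (Fin n) ℂ) :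
    lamAux Q (g - h) = lamAux Q g - lamAux Q h := by
  rw [sub_eq_add_neg, lamAux_add, lamAux_neg, sub_eq_add_neg]

lemma lamAux_congr {Q Q' : (Fin n →₀ ℕ) → Prop} (h : ∀ c, Q c ↔ Q' c)
    (g : MvPolynomial (Fin n) ℂ) : lamAux Q g = lamAux Q' g := by
  unfold lamAux
  exact Finset.sum_congr rfl fun c _ => by rw [if_congr (h c) rfl rfl]

lemma lamAux_congr_support {Q Q' : (Fin n →₀ ℕ) → Prop}
    (g : MvPolynomial (Fin n) ℂ) (h : ∀ c ∈ g.support, (Q c ↔ Q' c)) :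
    lamAux Q g = lamAux Q' g := by
  unfold lamAux
  exact Finset.sum_congr rfl fun c hc => by rw [if_congr (h c hc) rfl rfl]

lemma lamAux_mul_monomial (Q : (Fin n →₀ ℕ) → Prop) (g : MvPolynomial (Fin n) ℂ)
    (P : Fin n →₀ ℕ) :
    lamAux Q (g * monomial P 1) = lamAux (fun c => Q (c + P)) g := by
  induction g using MvPolynomial.induction_on' with
  | monomial c r =>
    rw [monomial_mul, mul_one, lamAux_monomial, lamAux_monomial]
  | add p q hp hq =>
    rw [add_mul, lamAux_add, lamAux_add, hp, hq]

lemma lamAux_eq_sum_filter (Q : (Fin n →₀ ℕ) → Prop) (g : MvPolynomial (Fin n) ℂ) :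
    lamAux Q g = ∑ c ∈ g.support.filter Q, g.coeff c := by
  rw [lamAux, Finset.sum_filter]

def Rel (J : Ideal (MvPolynomial (Fin n) ℂ)) (W : (Fin n →₀ ℕ) → ℚ) (c c' : Fin n →₀ ℕ) : Prop :=
  ((monomial c 1 - monomial c' 1 : MvPolynomial (Fin n) ℂ) ∈ J) ∧ W c = W c'

variable {J : Ideal (MvPolynomial (Fin n) ℂ)} {W : (Fin n →₀ ℕ) → ℚ}

lemma Rel.refl (c : Fin n →₀ ℕ) : Rel J W c c := ⟨by simp, rfl⟩

lemma Rel.symm {c c' : Fin n →₀ ℕ} (h : Rel J W c c') : Rel J W c' c :=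
  ⟨by simpa using J.neg_mem h.1, h.2.symm⟩

lemma Rel.trans {c c' c'' : Fin n →₀ ℕ} (h : Rel J W c c') (h' : Rel J W c' c'') :
    Rel J W c c'' :=
  ⟨by simpa using J.add_mem h.1 h'.1, h.2.trans h'.2⟩

lemma Rel.add_right (hW : ∀ c c' : Fin n →₀ ℕ, W (c + c') = W c + W c')
    {c c' : Fin n →₀ ℕ} (h : Rel J W c c') (P : Fin n →₀ ℕ) :
    Rel J W (c + P) (c' + P) := by
  refine ⟨?_, by rw [hW, hW, h.2]⟩
  have : (monomial (c+P) 1 - monomial (c'+P) 1 : MvPolynomial (Fin n) ℂ)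
      = (monomial c 1 - monomial c' 1) * monomial P 1 := by
    rw [sub_mul, monomial_mul, monomial_mul, mul_one]
  rw [this]
  exact J.mul_mem_right _ h.1

noncomputable def lam (J : Ideal (MvPolynomial (Fin n) ℂ)) (W : (Fin n →₀ ℕ) → ℚ)
    (c₀ : Fin n →₀ ℕ) (g : MvPolynomial (Fin n) ℂ) : ℂ :=
  lamAux (fun c => Rel J W c c₀) g

section L1

variable {k : ℕ} {a : Fin k → Fin n → ℤ} {S : Finset (Fin k)} {M : Set (Fin n →₀ ℕ)}
  {W : (Fin n →₀ ℕ) → ℚ}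

/-- L1 : `lam c₀` vanishes on the ideal, provided `c₀` is "live". -/
lemma lam_eq_zero_of_mem
    (hW : ∀ c c' : Fin n →₀ ℕ, W (c + c') = W c + W c')
    (hrow : ∀ i ∈ S, W (pos a i) = W (neg a i))
    {c₀ : Fin n →₀ ℕ} (hc₀ : (monomial c₀ 1 : MvPolynomial (Fin n) ℂ) ∉ Jid a S M)
    {p : MvPolynomial (Fin n) ℂ} (hp : p ∈ Jid a S M) :
    lam (Jid a S M) W c₀ p = 0 := by
  set J := Jid a S M with hJ
  have main : ∀ q : MvPolynomial (Fin n) ℂ, lam J W c₀ (q * p) = 0 := by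
    refine Submodule.span_induction
      (p := fun p _ => ∀ q : MvPolynomial (Fin n) ℂ, lam J W c₀ (q * p) = 0)
      ?_ ?_ ?_ ?_ hp
    · rintro x (⟨i, hi, rfl⟩ | ⟨m, hm, rfl⟩) q
      · -- x = fb a i
        rw [lam, fb, mul_sub, lamAux_sub, lamAux_mul_monomial, lamAux_mul_monomial]
        rw [lamAux_congr (Q := fun c => Rel J W (c + pos a i) c₀)
          (Q' := fun c => Rel J W (c + neg a i) c₀) ?_, sub_self]
        intro c
        have hrel : Rel J W (c + pos a i) (c + neg a i) := by
          constructor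
          · rw [← mul_fb]
            exact J.mul_mem_left _ (fb_mem_Jid a (by simpa using hi))
          · rw [hW, hW, hrow i (by simpa using hi)]
        exact ⟨fun h => hrel.symm.trans h, fun h => hrel.trans h⟩
      · -- x = monomial m 1
        rw [lam, lamAux_mul_monomial, lamAux]
        refine Finset.sum_eq_zero fun c _ => ?_
        rw [if_neg]
        intro hrel
        refine hc₀ ?_
        have h1 : (monomial (c + m) 1 : MvPolynomial (Fin n) ℂ) ∈ J := by
          have : (monomial (c + m) 1 : MvPolynomial (Fin n) ℂ)
              = monomial c 1 * monomial m 1 := by rw [monomial_mul, mul_one]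
          rw [this]
          exact J.mul_mem_left _ (monomial_mem_Jid a hm)
        have := J.sub_mem h1 hrel.1
        simpa using this
    · intro q; simp [lam, lamAux]
    · intro x y _ _ hx hy q
      rw [mul_add, lam, lamAux_add, ← lam, ← lam, hx, hy, add_zero]
    · intro r x _ hx q
      rw [smul_eq_mul, ← mul_assoc, hx]
  simpa using main 1

/-- L2 : if all live `lam`s vanish, then `g` is in the ideal. -/
lemma mem_of_forall_lam_eq_zero
    (hW : ∀ c c' : Fin n →₀ ℕ, W (c + c') = W c + W c')
    (hrow : ∀ i ∈ S, W (pos a i) = W (neg a i))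
    (g : MvPolynomial (Fin n) ℂ)
    (hlam : ∀ c₀, (monomial c₀ 1 : MvPolynomial (Fin n) ℂ) ∉ Jid a S M →
      lam (Jid a S M) W c₀ g = 0) :
    g ∈ Jid a S M := by
  set J := Jid a S M with hJ
  suffices H : ∀ (N : ℕ) (g : MvPolynomial (Fin n) ℂ), g.support.card ≤ N →
      (∀ c₀, (monomial c₀ 1 : MvPolynomial (Fin n) ℂ) ∉ J → lam J W c₀ g = 0) → g ∈ J by
    exact H g.support.card g le_rfl hlam
  intro N
  induction N with
  | zero =>
    intro g hcard _
    have : g.support = ∅ := Finset.card_eq_zero.mp (Nat.le_zero.mp hcard)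
    have hg0 : g = 0 := by
      ext d; by_contra hd
      exact absurd (MvPolynomial.mem_support_iff.mpr (by simpa using hd)) (by simp [this])
    exact hg0 ▸ J.zero_mem
  | succ N IH =>
    intro g hcard hlamg
    by_cases hg : g = 0
    · exact hg ▸ J.zero_mem
    obtain ⟨c, hc⟩ := (MvPolynomial.support_nonempty.mpr hg)
    have hcoeff : g.coeff c ≠ 0 := MvPolynomial.mem_support_iff.mp hc
    by_cases hlive : (monomial c 1 : MvPolynomial (Fin n) ℂ) ∈ J
    · -- dead case
      set e : MvPolynomial (Fin n) ℂ := monomial c (g.coeff c) with he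
      have heJ : e ∈ J := by
        have : e = C (g.coeff c) * monomial c 1 := by rw [C_mul_monomial, mul_one]
        rw [this]; exact J.mul_mem_left _ hlive
      have hsupp : (g - e).support ⊆ g.support.erase c := by
        intro d hd
        have hd' : g.coeff d - (if c = d then g.coeff c else 0) ≠ 0 := by
          simpa [he, MvPolynomial.coeff_sub, coeff_monomial] using
            MvPolynomial.mem_support_iff.mp hd
        by_cases hdc : c = d
        · simp [hdc] at hd'
        · refine Finset.mem_erase.mpr ⟨fun h => hdc h.symm, MvPolynomial.mem_support_iff.mpr ?_⟩
          simpa [hdc] using hd'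
      have hcard' : (g - e).support.card ≤ N := by
        have h1 := Finset.card_le_card hsupp
        have h2 : (g.support.erase c).card < g.support.card := Finset.card_erase_lt_of_mem hc
        omega
      have hge : g - e ∈ J := by
        refine IH (g - e) hcard' fun c₀ hc₀ => ?_
        rw [lam, show g - e = g + (-e) by ring, lamAux_add, lamAux_neg, ← lam, ← lam,
          hlamg c₀ hc₀, lam_eq_zero_of_mem hW hrow hc₀ heJ]
        ring
      simpa using J.add_mem hge heJ
    · -- live case
      have hl := hlamg c hlive
      rw [lam, lamAux_eq_sum_filter] at hl
      have hcfil : c ∈ g.support.filter (fun c' => Rel J W c' c) :=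
        Finset.mem_filter.mpr ⟨hc, Rel.refl c⟩
      have hex : ∃ c' ∈ g.support.filter (fun c' => Rel J W c' c), c' ≠ c := by
        by_contra hno
        push_neg at hno
        have : g.support.filter (fun c' => Rel J W c' c) = {c} := by
          apply Finset.eq_singleton_iff_unique_mem.mpr ⟨hcfil, hno⟩
        rw [this] at hl
        simp at hl
        exact hcoeff hl
      obtain ⟨c', hc'mem, hc'ne⟩ := hex
      have hc'rel : Rel J W c' c := (Finset.mem_filter.mp hc'mem).2
      have hc'supp : c' ∈ g.support := (Finset.mem_filter.mp hc'mem).1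
      set e : MvPolynomial (Fin n) ℂ :=
        C (g.coeff c) * (monomial c 1 - monomial c' 1) with he
      have heJ : e ∈ J := by
        have : (monomial c 1 - monomial c' 1 : MvPolynomial (Fin n) ℂ) ∈ J := hc'rel.symm.1
        exact J.mul_mem_left _ this
      have hecoeff : ∀ d, e.coeff d
          = (if c = d then g.coeff c else 0) - (if c' = d then g.coeff c else 0) := by
        intro d
        simp [he, mul_sub, C_mul_monomial, MvPolynomial.coeff_sub, coeff_monomial]
      have hsupp : (g - e).support ⊆ g.support.erase c := by
        intro d hd
        have hd' : g.coeff d - e.coeff d ≠ 0 := by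
          simpa [MvPolynomial.coeff_sub] using MvPolynomial.mem_support_iff.mp hd
        rw [hecoeff d] at hd'
        by_cases hdc : c = d
        · subst hdc
          rw [if_pos rfl, if_neg hc'ne] at hd'
          simp at hd'
        · refine Finset.mem_erase.mpr ⟨fun h => hdc h.symm, MvPolynomial.mem_support_iff.mpr ?_⟩
          by_cases hdc' : c' = d
          · exact hdc' ▸ MvPolynomial.mem_support_iff.mp hc'supp
          · rw [if_neg hdc, if_neg hdc'] at hd'
            simpa using hd'
      have hcard' : (g - e).support.card ≤ N := by
        have h1 := Finset.card_le_card hsupp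
        have h2 : (g.support.erase c).card < g.support.card := Finset.card_erase_lt_of_mem hc
        omega
      have hge : g - e ∈ J := by
        refine IH (g - e) hcard' fun c₀ hc₀ => ?_
        rw [lam, show g - e = g + (-e) by ring, lamAux_add, lamAux_neg, ← lam, ← lam,
          hlamg c₀ hc₀, lam_eq_zero_of_mem hW hrow hc₀ heJ]
        ring
      simpa using J.add_mem hge heJ

end L1

section NZD

lemma nzd_monomial {J : Ideal (MvPolynomial (Fin n) ℂ)} (c : Fin n →₀ ℕ)
    (h : ∀ j ∈ c.support, ∀ g : MvPolynomial (Fin n) ℂ, X j * g ∈ J → g ∈ J) :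
    ∀ g : MvPolynomial (Fin n) ℂ, monomial c 1 * g ∈ J → g ∈ J := by
  induction c using Finsupp.induction with
  | zero => intro g hg; simpa using hg
  | single_add j b f hjf hb IH =>
    intro g hg
    have hXj : ∀ g : MvPolynomial (Fin n) ℂ, X j * g ∈ J → g ∈ J := by
      refine h j ?_
      rw [Finsupp.mem_support_iff]
      simp [Finsupp.single_apply, hb, Finsupp.notMem_support_iff.mp hjf]
    have hXpow : ∀ (b : ℕ) (g : MvPolynomial (Fin n) ℂ), X j ^ b * g ∈ J → g ∈ J := by
      intro b
      induction b with
      | zero => intro g hg; simpa using hg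
      | succ b IHb =>
        intro g hg
        refine IHb g (hXj _ ?_)
        have : X j * (X j ^ b * g) = X j ^ (b+1) * g := by ring
        rw [this]; exact hg
    refine IH (fun j' hj' g hg => h j' ?_ g hg) g ?_
    · rw [Finsupp.mem_support_iff]
      have hne : j' ≠ j := fun hEq => hjf (hEq ▸ hj')
      simp [Finsupp.single_apply, hne.symm, Finsupp.mem_support_iff.mp hj']
    · refine hXpow b _ ?_
      have : X j ^ b * ((monomial f) 1 * g) = monomial (Finsupp.single j b + f) 1 * g := by
        rw [X_pow_eq_monomial, ← mul_assoc, monomial_mul, one_mul]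
      rw [this]; exact hg

end NZD

section Claim2

variable {k : ℕ} (a : Fin k → Fin n → ℤ)

lemma claim2_of_claim1
    (hrank : LinearIndependent ℚ (fun i : Fin k => fun j : Fin n => (a i j : ℚ)))
    (hcol : ∀ j : Fin n, ∀ i i' : Fin k, 0 < a i j → 0 < a i' j → i = i')
    (S : Finset (Fin k)) (M : Set (Fin n →₀ ℕ)) (i' : Fin k) (hi' : i' ∉ S)
    (H1 : ∀ j : Fin n, (∀ i ∈ S, a i j ≤ 0) → (∀ m ∈ M, m j = 0) →
      ∀ g : MvPolynomial (Fin n) ℂ, X j * g ∈ Jid a S M → g ∈ Jid a S M)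
    (hb' : ∀ j : Fin n, 0 < a i' j → ∀ m ∈ M, m j = 0) :
    ∀ g : MvPolynomial (Fin n) ℂ, fb a i' * g ∈ Jid a S M → g ∈ Jid a S M := by
  intro g hfg
  by_contra hg
  set J := Jid a S M with hJ
  -- the monomial `pos a i'` is a nonzerodivisor mod J
  have hXnzd : ∀ j ∈ (pos a i').support, ∀ g : MvPolynomial (Fin n) ℂ,
      X j * g ∈ J → g ∈ J := by
    intro j hj
    have hj' : 0 < a i' j := by
      have := Finsupp.mem_support_iff.mp hj
      rw [pos_apply] at this
      omega
    refine H1 j (fun i hi => ?_) (hb' j hj')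
    by_contra hpos
    push_neg at hpos
    exact hi' ((hcol j i i' hpos hj') ▸ hi)
  have hmono : ∀ g : MvPolynomial (Fin n) ℂ,
      monomial (pos a i') 1 * g ∈ J → g ∈ J := nzd_monomial _ hXnzd
  -- the weight functional
  set v : Fin k → (Fin n → ℚ) := fun i j => (a i j : ℚ) with hv
  have hvnm : v i' ∉ Submodule.span ℚ (v '' ↑S) :=
    hrank.notMem_span_image (by simpa using hi')
  obtain ⟨φ₀, hφ0ne, hφ0bot⟩ :=
    Submodule.exists_dual_map_eq_bot_of_notMem hvnm inferInstance
  set φ : (Fin n → ℚ) →ₗ[ℚ] ℚ := (φ₀ (v i'))⁻¹ • φ₀ with hφ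
  have hφi' : φ (v i') = 1 := by
    simp [hφ, inv_mul_cancel₀ hφ0ne]
  have hφS : ∀ i ∈ S, φ (v i) = 0 := by
    intro i hi
    have hmem : v i ∈ Submodule.span ℚ (v '' ↑S) :=
      Submodule.subset_span ⟨i, by simpa using hi, rfl⟩
    have : φ₀ (v i) ∈ Submodule.map φ₀ (Submodule.span ℚ (v '' ↑S)) :=
      Submodule.mem_map_of_mem hmem
    rw [hφ0bot] at this
    simp only [Submodule.mem_bot] at this
    simp [hφ, this]
  set W : (Fin n →₀ ℕ) → ℚ := fun c => φ (fun j => (c j : ℚ)) with hWdef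
  have hWadd : ∀ c c' : Fin n →₀ ℕ, W (c + c') = W c + W c' := by
    intro c c'
    have : (fun j => (((c + c') j : ℕ) : ℚ))
        = (fun j => ((c j : ℕ) : ℚ)) + (fun j => ((c' j : ℕ) : ℚ)) := by
      funext j; rw [Finsupp.add_apply, Pi.add_apply]; push_cast; ring
    simp only [hWdef, this, map_add]
  have hWrow : ∀ i : Fin k, W (pos a i) - W (neg a i) = φ (v i) := by
    intro i
    rw [hWdef]
    simp only
    rw [← map_sub]
    congr 1
    funext j
    simp only [Pi.sub_apply, pos_apply, neg_apply, hv]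
    have hz : ((a i j).toNat : ℤ) - ((-(a i j)).toNat : ℤ) = a i j := by omega
    have hq : ((((a i j).toNat : ℤ) : ℚ)) - ((((-(a i j)).toNat : ℤ)) : ℚ) = ((a i j : ℤ) : ℚ) := by
      exact_mod_cast congrArg (fun z : ℤ => (z : ℚ)) hz
    push_cast at hq ⊢
    linarith
  have hrow : ∀ i ∈ S, W (pos a i) = W (neg a i) := by
    intro i hi
    have := hWrow i
    rw [hφS i hi] at this
    linarith
  have hN : W (pos a i') - W (neg a i') = 1 := by rw [hWrow i', hφi']
  -- liveness transfer along Rel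
  have hlive_of_rel : ∀ {c c' : Fin n →₀ ℕ}, Rel J W c c' →
      (monomial c' 1 : MvPolynomial (Fin n) ℂ) ∉ J →
      (monomial c 1 : MvPolynomial (Fin n) ℂ) ∉ J := by
    intro c c' hrel hc' hc
    have h2 := J.sub_mem hc hrel.1
    rw [sub_sub_cancel] at h2
    exact hc' h2
  -- the nonempty finset of "live witnesses"
  have hCx : ∃ c ∈ g.support, (monomial c 1 : MvPolynomial (Fin n) ℂ) ∉ J
      ∧ lam J W c g ≠ 0 := by
    by_contra hno
    push_neg at hno
    refine hg (mem_of_forall_lam_eq_zero hWadd hrow g ?_)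
    intro c₀ hc₀live
    by_contra hlne
    have hex : ∃ c ∈ g.support, Rel J W c c₀ := by
      by_contra hempty
      push_neg at hempty
      exact hlne (Finset.sum_eq_zero fun c hc => if_neg (hempty c hc))
    obtain ⟨c, hcsupp, hrel⟩ := hex
    have hclive := hlive_of_rel hrel hc₀live
    have hlamc : lam J W c g = lam J W c₀ g := by
      refine lamAux_congr (fun c' => ?_) g
      exact ⟨fun h => h.trans hrel, fun h => h.trans hrel.symm⟩
    have hzero := hno c hcsupp hclive
    rw [hlamc] at hzero
    exact hlne hzero
  set C : Finset (Fin n →₀ ℕ) :=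
    g.support.filter (fun c => (monomial c 1 : MvPolynomial (Fin n) ℂ) ∉ J ∧ lam J W c g ≠ 0)
    with hC
  have hCne : C.Nonempty := by
    obtain ⟨c, h1, h2, h3⟩ := hCx
    exact ⟨c, Finset.mem_filter.mpr ⟨h1, h2, h3⟩⟩
  obtain ⟨c₀, hc₀C, hmax⟩ := Finset.exists_max_image C W hCne
  obtain ⟨hc₀supp, hc₀live, hc₀lam⟩ := Finset.mem_filter.mp hc₀C
  set ζ : Fin n →₀ ℕ := c₀ + pos a i' with hζ
  have hζlive : (monomial ζ 1 : MvPolynomial (Fin n) ℂ) ∉ J := by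
    intro hζJ
    refine hc₀live (hmono _ ?_)
    rw [monomial_mul, one_mul, add_comm]
    exact hζJ
  have h0 : lam J W ζ (fb a i' * g) = 0 :=
    lam_eq_zero_of_mem hWadd hrow hζlive hfg
  have hexp : lam J W ζ (fb a i' * g)
      = lamAux (fun c => Rel J W (c + pos a i') ζ) g
        - lamAux (fun c => Rel J W (c + neg a i') ζ) g := by
    rw [lam, show fb a i' * g
      = g * monomial (pos a i') 1 - g * monomial (neg a i') 1 by rw [fb]; ring,
      lamAux_sub, lamAux_mul_monomial, lamAux_mul_monomial]
  have hA : lamAux (fun c => Rel J W (c + pos a i') ζ) g = lam J W c₀ g := by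
    refine lamAux_congr (fun c => ?_) g
    constructor
    · intro h
      constructor
      · refine hmono _ ?_
        have heq : (monomial (pos a i') 1 : MvPolynomial (Fin n) ℂ)
            * (monomial c 1 - monomial c₀ 1)
            = monomial (c + pos a i') 1 - monomial ζ 1 := by
          rw [mul_sub, monomial_mul, monomial_mul, one_mul, hζ]
          rw [add_comm c (pos a i'), add_comm c₀ (pos a i')]
        rw [heq]
        exact h.1
      · have := h.2
        rw [hWadd, hζ, hWadd] at this
        linarith
    · intro h
      exact Rel.add_right hWadd h (pos a i')
  -- the grouping lemma
  have key : ∀ (N : ℕ) (T : Finset (Fin n →₀ ℕ)), T.card ≤ N → T ⊆ g.support →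
      (∀ c ∈ T, ∀ c' ∈ g.support, Rel J W c' c → c' ∈ T) →
      (∀ c ∈ T, lam J W c g = 0) →
      ∑ c ∈ T, g.coeff c = 0 := by
    intro N
    induction N with
    | zero =>
      intro T hcard _ _ _
      rw [Finset.card_eq_zero.mp (Nat.le_zero.mp hcard)]
      simp
    | succ N IHN =>
      intro T hcard hsub hsat hlamz
      rcases T.eq_empty_or_nonempty with hT | ⟨c₁, hc₁⟩
      · simp [hT]
      rw [← Finset.sum_filter_add_sum_filter_not T (fun c => Rel J W c c₁)]
      have h1 : T.filter (fun c => Rel J W c c₁)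
          = g.support.filter (fun c => Rel J W c c₁) := by
        apply Finset.ext
        intro c
        simp only [Finset.mem_filter]
        exact ⟨fun ⟨h1, h2⟩ => ⟨hsub h1, h2⟩, fun ⟨h1, h2⟩ => ⟨hsat c₁ hc₁ c h1 h2, h2⟩⟩
      have h2 : ∑ c ∈ T.filter (fun c => Rel J W c c₁), g.coeff c = 0 := by
        rw [h1, ← lamAux_eq_sum_filter]
        exact hlamz c₁ hc₁
      have h3 : ∑ c ∈ T.filter (fun c => ¬ Rel J W c c₁), g.coeff c = 0 := by
        refine IHN _ ?_ (fun c hc => hsub (Finset.mem_of_mem_filter c hc)) ?_ ?_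
        · have hc₁notin : c₁ ∉ T.filter (fun c => ¬ Rel J W c c₁) := by
            simp [Finset.mem_filter, Rel.refl]
          have hss : T.filter (fun c => ¬ Rel J W c c₁) ⊆ T.erase c₁ := by
            intro c hc
            rw [Finset.mem_erase]
            refine ⟨fun hEq => ?_, Finset.mem_of_mem_filter c hc⟩
            subst hEq
            exact (Finset.mem_filter.mp hc).2 (Rel.refl c)
          have := Finset.card_le_card hss
          have := Finset.card_erase_lt_of_mem hc₁
          omega
        · intro c hc c' hc' hrel
          rw [Finset.mem_filter] at hc ⊢
          refine ⟨hsat c hc.1 c' hc' hrel, fun habs => hc.2 (hrel.symm.trans habs)⟩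
        · intro c hc
          exact hlamz c (Finset.mem_of_mem_filter c hc)
      rw [h2, h3, add_zero]
  have hB : lamAux (fun c => Rel J W (c + neg a i') ζ) g = 0 := by
    rw [lamAux_eq_sum_filter]
    set T : Finset (Fin n →₀ ℕ) :=
      g.support.filter (fun c => Rel J W (c + neg a i') ζ) with hT
    refine key T.card T le_rfl (Finset.filter_subset _ _) ?_ ?_
    · intro c hc c' hc' hrel
      rw [hT, Finset.mem_filter] at hc ⊢
      exact ⟨hc', (Rel.add_right hWadd hrel (neg a i')).trans hc.2⟩
    · intro c hc
      rw [hT, Finset.mem_filter] at hc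
      obtain ⟨hcsupp, hcrel⟩ := hc
      -- c is live
      have hclive : (monomial c 1 : MvPolynomial (Fin n) ℂ) ∉ J := by
        intro hcJ
        refine hζlive ?_
        have h1 : (monomial (c + neg a i') 1 : MvPolynomial (Fin n) ℂ) ∈ J := by
          have : (monomial (c + neg a i') 1 : MvPolynomial (Fin n) ℂ)
              = monomial (neg a i') 1 * monomial c 1 := by
            rw [monomial_mul, one_mul, add_comm]
          rw [this]
          exact J.mul_mem_left _ hcJ
        simpa using J.sub_mem h1 hcrel.1
      -- weight of c is W c₀ + 1
      have hWc : W c = W c₀ + 1 := by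
        have := hcrel.2
        rw [hWadd, hζ, hWadd] at this
        linarith
      -- so lam c g must vanish by maximality
      by_contra hlne
      have hcC : c ∈ C := Finset.mem_filter.mpr ⟨hcsupp, hclive, hlne⟩
      have := hmax c hcC
      rw [hWc] at this
      linarith
  rw [hexp, hA, hB, sub_zero] at h0
  exact hc₀lam h0

end Claim2

section Claim1

variable {k : ℕ} (a : Fin k → Fin n → ℤ)

lemma Jid_empty (M : Set (Fin n →₀ ℕ)) :
    Jid a (∅ : Finset (Fin k)) M
      = Ideal.span ((fun m => (monomial m (1:ℂ) : MvPolynomial (Fin n) ℂ)) '' M) := by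
  rw [Jid]
  congr 1
  simp

lemma claim1_empty (M : Set (Fin n →₀ ℕ)) (j : Fin n) (hM : ∀ m ∈ M, m j = 0)
    (g : MvPolynomial (Fin n) ℂ) (hXg : X j * g ∈ Jid a (∅ : Finset (Fin k)) M) :
    g ∈ Jid a (∅ : Finset (Fin k)) M := by
  rw [Jid_empty] at hXg ⊢
  rw [mem_ideal_span_monomial_image] at hXg ⊢
  intro c hc
  have hc' : Finsupp.single j 1 + c ∈ (X j * g).support := by
    rw [MvPolynomial.mem_support_iff, coeff_X_mul]
    exact MvPolynomial.mem_support_iff.mp hc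
  obtain ⟨m, hm, hle⟩ := hXg _ hc'
  refine ⟨m, hm, ?_⟩
  intro l
  have := hle l
  rcases eq_or_ne l j with rfl | hne
  · rw [hM m hm]
    exact Nat.zero_le _
  · rw [Finsupp.add_apply, Finsupp.single_apply, if_neg (fun h => hne h.symm), zero_add] at this
    exact this

lemma Jid_erase_sup {S : Finset (Fin k)} {M : Set (Fin n →₀ ℕ)} {i : Fin k} (hi : i ∈ S) :
    Jid a S M = Jid a (S.erase i) M ⊔ Ideal.span {fb a i} := by
  rw [Jid, Jid, ← Ideal.span_union]
  congr 1
  have : (↑S : Set (Fin k)) = insert i ↑(S.erase i) := by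
    rw [← Finset.coe_insert, Finset.insert_erase hi]
  rw [this, Set.image_insert_eq, Set.insert_eq, Set.union_assoc,
    Set.union_comm ({fb a i} : Set (MvPolynomial (Fin n) ℂ)) _]

lemma monomial_neg_mem_span_X {i'' : Fin k} {j : Fin n} (h : a i'' j < 0) :
    (monomial (neg a i'') 1 : MvPolynomial (Fin n) ℂ)
      ∈ Ideal.span {(X j : MvPolynomial (Fin n) ℂ)} := by
  have h1 : Finsupp.single j 1 ≤ neg a i'' := by
    rw [Finsupp.single_le_iff, neg_apply]
    omega
  obtain ⟨d, hd⟩ := le_iff_exists_add.mp h1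
  rw [Ideal.mem_span_singleton]
  refine ⟨monomial d 1, ?_⟩
  rw [X, monomial_mul, one_mul, ← hd]

lemma X_mem_Jid_single {S : Finset (Fin k)} {M : Set (Fin n →₀ ℕ)} {j : Fin n}
    (hm : Finsupp.single j 1 ∈ M) : (X j : MvPolynomial (Fin n) ℂ) ∈ Jid a S M := by
  have := monomial_mem_Jid a (S := S) hm
  rwa [← X] at this

lemma K_eq (S₀ : Finset (Fin k)) (M : Set (Fin n →₀ ℕ)) (j : Fin n)
    (hS₀ : ∀ i'' ∈ S₀, a i'' j ≤ 0) :
    Jid a S₀ M ⊔ Ideal.span {(X j : MvPolynomial (Fin n) ℂ)}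
      = Jid a (S₀.filter (fun i'' => a i'' j = 0))
          (M ∪ (pos a '' {i'' | i'' ∈ S₀ ∧ a i'' j < 0}) ∪ {Finsupp.single j 1}) := by
  set S' := S₀.filter (fun i'' => a i'' j = 0) with hS'
  set M' := M ∪ (pos a '' {i'' | i'' ∈ S₀ ∧ a i'' j < 0}) ∪ {Finsupp.single j 1} with hM'
  have hsingle : Finsupp.single j 1 ∈ M' := by
    rw [hM']; exact Set.mem_union_right _ rfl
  apply le_antisymm
  · refine sup_le ?_ ?_
    · rw [Jid, Ideal.span_le]
      rintro x (⟨i'', hi'', rfl⟩ | ⟨m, hm, rfl⟩)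
      · rcases eq_or_lt_of_le (hS₀ i'' hi'') with hz | hlt
        · exact fb_mem_Jid a (Finset.mem_filter.mpr ⟨hi'', hz⟩)
        · rw [fb]
          refine Submodule.sub_mem _ ?_ ?_
          · refine monomial_mem_Jid a ?_
            rw [hM']
            exact Set.mem_union_left _ (Set.mem_union_right _ ⟨i'', ⟨hi'', hlt⟩, rfl⟩)
          · have h1 := monomial_neg_mem_span_X a (i'' := i'') (j := j) hlt
            rw [Ideal.mem_span_singleton] at h1
            obtain ⟨d, hd⟩ := h1
            rw [hd]
            exact Ideal.mul_mem_right _ _ (X_mem_Jid_single a hsingle)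
      · exact monomial_mem_Jid a (by rw [hM']; exact Set.mem_union_left _ (Set.mem_union_left _ hm))
    · rw [Ideal.span_le, Set.singleton_subset_iff]
      exact X_mem_Jid_single a hsingle
  · rw [Jid, Ideal.span_le]
    rintro x (⟨i'', hi'', rfl⟩ | ⟨m, hm, rfl⟩)
    · have : i'' ∈ S₀ := (Finset.mem_filter.mp (by exact_mod_cast hi'')).1
      exact le_sup_left (α := Ideal (MvPolynomial (Fin n) ℂ)) (fb_mem_Jid a this)
    · rw [hM'] at hm
      rcases hm with (hm | ⟨i₂, ⟨hi₂, hlt⟩, rfl⟩) | hm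
      · exact le_sup_left (α := Ideal (MvPolynomial (Fin n) ℂ)) (monomial_mem_Jid a hm)
      · show (monomial (pos a i₂) 1 : MvPolynomial (Fin n) ℂ) ∈ _
        have h1 : (monomial (pos a i₂) 1 : MvPolynomial (Fin n) ℂ)
            = fb a i₂ + monomial (neg a i₂) 1 := by rw [fb]; ring
        rw [h1]
        refine Submodule.add_mem _ ?_ ?_
        · exact le_sup_left (α := Ideal (MvPolynomial (Fin n) ℂ)) (fb_mem_Jid a hi₂)
        · exact le_sup_right (α := Ideal (MvPolynomial (Fin n) ℂ))
            (monomial_neg_mem_span_X a hlt)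
      · rw [Set.mem_singleton_iff] at hm
        subst hm
        show (monomial (Finsupp.single j 1) 1 : MvPolynomial (Fin n) ℂ) ∈ _
        rw [← X]
        exact le_sup_right (α := Ideal (MvPolynomial (Fin n) ℂ))
          (Ideal.subset_span rfl)

lemma claim1
    (hrank : LinearIndependent ℚ (fun i : Fin k => fun j : Fin n => (a i j : ℚ)))
    (hcol : ∀ j : Fin n, ∀ i i' : Fin k, 0 < a i j → 0 < a i' j → i = i') :
    ∀ (N : ℕ) (S : Finset (Fin k)) (M : Set (Fin n →₀ ℕ)), S.card ≤ N →
    (∀ m ∈ M, ∀ l, m l ≠ 0 → ∀ i ∈ S, a i l ≤ 0) →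
    ∀ j : Fin n, (∀ i ∈ S, a i j ≤ 0) → (∀ m ∈ M, m j = 0) →
    ∀ g : MvPolynomial (Fin n) ℂ, X j * g ∈ Jid a S M → g ∈ Jid a S M := by
  intro N
  induction N with
  | zero =>
    intro S M hcard _ j _ hMj g hXg
    have : S = ∅ := Finset.card_eq_zero.mp (Nat.le_zero.mp hcard)
    subst this
    exact claim1_empty a M j hMj g hXg
  | succ N IH =>
    intro S M hcard INV j haj hMj g hXg
    rcases S.eq_empty_or_nonempty with rfl | ⟨i, hi⟩
    · exact claim1_empty a M j hMj g hXg
    set S₀ := S.erase i with hS₀def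
    have haj₀ : ∀ i'' ∈ S₀, a i'' j ≤ 0 := fun i'' hi'' => haj i'' (Finset.mem_of_mem_erase hi'')
    rw [Jid_erase_sup a hi] at hXg
    obtain ⟨h, hh, e, he, hsum⟩ := Submodule.mem_sup.mp hXg
    obtain ⟨q, rfl⟩ := Ideal.mem_span_singleton'.mp he
    set S' := S₀.filter (fun i'' => a i'' j = 0) with hS'def
    set M' := M ∪ (pos a '' {i'' | i'' ∈ S₀ ∧ a i'' j < 0}) ∪ {Finsupp.single j 1} with hM'def
    have hK : Jid a S₀ M ⊔ Ideal.span {(X j : MvPolynomial (Fin n) ℂ)} = Jid a S' M' :=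
      K_eq a S₀ M j haj₀
    have hcard₀ : S₀.card ≤ N := by
      have h2 : S₀.card = S.card - 1 := by
        rw [hS₀def]; exact Finset.card_erase_of_mem hi
      have h3 : 0 < S.card := Finset.card_pos.mpr ⟨i, hi⟩
      omega
    have hcard' : S'.card ≤ N := le_trans (Finset.card_le_card (Finset.filter_subset _ _)) hcard₀
    have hS'S : ∀ i'' ∈ S', i'' ∈ S :=
      fun i'' hi'' => Finset.mem_of_mem_erase (Finset.mem_of_mem_filter _ hi'')
    have INV' : ∀ m ∈ M', ∀ l, m l ≠ 0 → ∀ i₃ ∈ S', a i₃ l ≤ 0 := by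
      rintro m hm l hml i₃ hi₃
      rw [hM'def] at hm
      rcases hm with (hm | ⟨i₂, ⟨hi₂, hlt⟩, rfl⟩) | hm
      · exact INV m hm l hml i₃ (hS'S i₃ hi₃)
      · rw [pos_apply] at hml
        have hpos₂ : 0 < a i₂ l := by omega
        by_contra hc
        push_neg at hc
        have := hcol l i₃ i₂ hc hpos₂
        subst this
        have := (Finset.mem_filter.mp hi₃).2
        omega
      · rw [Set.mem_singleton_iff] at hm
        subst hm
        have hlj : l = j := by
          by_contra hne
          exact hml (Finsupp.single_eq_of_ne' (fun hEq => hne hEq.symm))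
        subst hlj
        have := (Finset.mem_filter.mp hi₃).2
        omega
    have hqK : fb a i * q ∈ Jid a S' M' := by
      rw [← hK]
      have heq : fb a i * q = X j * g - h := by
        rw [← hsum]; ring
      rw [heq]
      refine Submodule.sub_mem _ ?_ (le_sup_left (α := Ideal (MvPolynomial (Fin n) ℂ)) hh)
      refine le_sup_right (α := Ideal (MvPolynomial (Fin n) ℂ)) ?_
      rw [mul_comm]
      exact Ideal.mul_mem_left _ _ (Ideal.subset_span rfl)
    have hiS' : i ∉ S' := fun hc => (Finset.mem_erase.mp (Finset.mem_of_mem_filter _ hc)).1 rfl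
    have hb'' : ∀ l : Fin n, 0 < a i l → ∀ m ∈ M', m l = 0 := by
      intro l hl m hm
      rw [hM'def] at hm
      rcases hm with (hm | ⟨i₂, ⟨hi₂, hlt⟩, rfl⟩) | hm
      · by_contra hml
        have := INV m hm l hml i hi
        omega
      · rw [pos_apply]
        have : ¬ 0 < a i₂ l := by
          intro hpos₂
          have := hcol l i i₂ hl hpos₂
          subst this
          exact (Finset.mem_erase.mp hi₂).1 rfl
        omega
      · rw [Set.mem_singleton_iff] at hm
        subst hm
        have : l ≠ j := by
          intro hEq
          subst hEq
          have := haj i hi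
          omega
        exact Finsupp.single_eq_of_ne' (fun hEq => this hEq.symm)
    have hq : q ∈ Jid a S' M' :=
      claim2_of_claim1 a hrank hcol S' M' i hiS'
        (fun j' h1 h2 => IH S' M' hcard' INV' j' h1 h2) hb'' q hqK
    rw [← hK] at hq
    obtain ⟨h', hh', e', he', hq'⟩ := Submodule.mem_sup.mp hq
    obtain ⟨q'', rfl⟩ := Ideal.mem_span_singleton'.mp he'
    have hXgJ₀ : X j * (g - fb a i * q'') ∈ Jid a S₀ M := by
      have heq : X j * (g - fb a i * q'') = h + fb a i * h' := by
        have h1 : X j * g = h + fb a i * q := by rw [← hsum]; ring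
        have h2 : q = h' + q'' * X j := hq'.symm
        rw [h2] at h1
        calc X j * (g - fb a i * q'') = X j * g - X j * (fb a i * q'') := by ring
        _ = h + fb a i * (h' + q'' * X j) - X j * (fb a i * q'') := by rw [h1]
        _ = h + fb a i * h' := by ring
      rw [heq]
      exact Submodule.add_mem _ hh (Ideal.mul_mem_left _ _ hh')
    have hg₀ : g - fb a i * q'' ∈ Jid a S₀ M :=
      IH S₀ M hcard₀ (fun m hm l hml i₃ hi₃ => INV m hm l hml i₃ (Finset.mem_of_mem_erase hi₃))
        j haj₀ hMj _ hXgJ₀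
    have hgeq : g = (g - fb a i * q'') + fb a i * q'' := by ring
    rw [hgeq]
    refine Submodule.add_mem _ (Jid_mono a (Finset.erase_subset i S) hg₀) ?_
    exact Ideal.mul_mem_right _ _ (fb_mem_Jid a hi)

end Claim1

section Final

variable {k : ℕ} (a : Fin k → Fin n → ℤ)

lemma prod_X_pow_univ (d : Fin n →₀ ℕ) :
    (∏ j, (X j : MvPolynomial (Fin n) ℂ) ^ d j) = monomial d 1 := by
  rw [← MvPolynomial.prod_X_pow_eq_monomial]
  refine (Finset.prod_subset (Finset.subset_univ _) ?_).symm
  intro j _ hj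
  rw [Finsupp.notMem_support_iff.mp hj, pow_zero]

lemma fb_eq_prod (i : Fin k) :
    fb a i = (∏ j, (X j : MvPolynomial (Fin n) ℂ) ^ (a i j).toNat)
      - ∏ j, (X j : MvPolynomial (Fin n) ℂ) ^ (-(a i j)).toNat := by
  rw [fb, ← prod_X_pow_univ (pos a i), ← prod_X_pow_univ (neg a i)]
  rfl

lemma main_nzd
    (hrank : LinearIndependent ℚ (fun i : Fin k => fun j : Fin n => (a i j : ℚ)))
    (hcol : ∀ j : Fin n, ∀ i i' : Fin k, 0 < a i j → 0 < a i' j → i = i')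
    (t : ℕ) (ht : t < k) :
    ∀ g : MvPolynomial (Fin n) ℂ,
      fb a ⟨t, ht⟩ * g ∈ Jid a (Finset.univ.filter (fun i' : Fin k => (i' : ℕ) < t)) ∅ →
      g ∈ Jid a (Finset.univ.filter (fun i' : Fin k => (i' : ℕ) < t)) ∅ := by
  set S := Finset.univ.filter (fun i' : Fin k => (i' : ℕ) < t) with hS
  have hnot : (⟨t, ht⟩ : Fin k) ∉ S := by
    rw [hS, Finset.mem_filter]
    simp
  refine claim2_of_claim1 a hrank hcol S ∅ ⟨t, ht⟩ hnot ?_ ?_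
  · intro j h1 h2
    refine claim1 a hrank hcol k S ∅ ?_ ?_ j h1 h2
    · calc S.card ≤ Finset.univ.card := Finset.card_le_univ S
      _ = k := by rw [Finset.card_univ, Fintype.card_fin]
    · intro m hm
      exact absurd hm (Set.notMem_empty m)
  · intro j _ m hm
    exact absurd hm (Set.notMem_empty m)

end Final
end FS


/-- **Fischer–Shapiro.** If `𝒜 = (a i j)` is a `k × n` integer matrix of rank `k`
(its rows are linearly independent over `ℚ`) such that every column has at most one
positive entry, then the binomials
`f i = ∏ j, x j ^ (a i j)⁺ - ∏ j, x j ^ (a i j)⁻` form a regular sequence in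
`ℂ[x₁, …, xₙ]`. -/
theorem fischer_shapiro_regular_sequence (k n : ℕ) (a : Fin k → Fin n → ℤ)
    (hrank : LinearIndependent ℚ (fun i : Fin k => fun j : Fin n => (a i j : ℚ)))
    (hcol : ∀ j : Fin n, ∀ i i' : Fin k, 0 < a i j → 0 < a i' j → i = i') :
    RingTheory.Sequence.IsRegular (MvPolynomial (Fin n) ℂ)
      (List.ofFn fun i : Fin k =>
        (∏ j, (X j : MvPolynomial (Fin n) ℂ) ^ (a i j).toNat)
          - ∏ j, (X j : MvPolynomial (Fin n) ℂ) ^ (-(a i j)).toNat) := by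
  classical
  set F : Fin k → MvPolynomial (Fin n) ℂ := fun i =>
    (∏ j, (X j : MvPolynomial (Fin n) ℂ) ^ (a i j).toNat)
      - ∏ j, (X j : MvPolynomial (Fin n) ℂ) ^ (-(a i j)).toNat with hF
  have hFfb : ∀ i, F i = FS.fb a i := fun i => (FS.fb_eq_prod a i).symm
  set rs : List (MvPolynomial (Fin n) ℂ) := List.ofFn F with hrs
  have hlen : rs.length = k := by rw [hrs, List.length_ofFn]
  -- the span of a prefix
  have htake : ∀ (t : ℕ), t ≤ k →
      Ideal.ofList (rs.take t)
        = FS.Jid a (Finset.univ.filter (fun i' : Fin k => (i' : ℕ) < t)) ∅ := by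
    intro t htk
    rw [Ideal.ofList, FS.Jid]
    congr 1
    rw [Set.image_empty, Set.union_empty]
    ext x
    constructor
    · intro hx
      simp only [Set.mem_setOf_eq] at hx
      rw [hrs, ← Fin.ofFn_take_eq_take_ofFn htk, List.mem_ofFn] at hx
      obtain ⟨p, hp⟩ := hx
      refine ⟨Fin.castLE htk p, ?_, ?_⟩
      · simpa using p.isLt
      · rw [← hFfb]
        exact hp
    · rintro ⟨i', hi', rfl⟩
      simp only [Finset.coe_filter, Finset.mem_univ, true_and, Set.mem_setOf_eq] at hi'
      simp only [Set.mem_setOf_eq]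
      rw [hrs, ← Fin.ofFn_take_eq_take_ofFn htk, List.mem_ofFn]
      refine ⟨⟨(i' : ℕ), hi'⟩, ?_⟩
      rw [← hFfb]
      show F (Fin.castLE htk ⟨(i' : ℕ), hi'⟩) = F i'
      rfl
  have hsmul_top : ∀ I : Ideal (MvPolynomial (Fin n) ℂ),
      I • (⊤ : Submodule (MvPolynomial (Fin n) ℂ) (MvPolynomial (Fin n) ℂ)) = I := by
    intro I
    rw [Ideal.smul_eq_mul, Ideal.mul_top]
  constructor
  · -- weakly regular
    refine (RingTheory.Sequence.isWeaklyRegular_iff _ _).mpr ?_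
    intro t htlen
    rw [hlen] at htlen
    have hnzd := FS.main_nzd a hrank hcol t htlen
    set S := Finset.univ.filter (fun i' : Fin k => (i' : ℕ) < t) with hSdef
    have hget : rs[t]'(by rw [hlen]; exact htlen) = FS.fb a ⟨t, htlen⟩ := by
      rw [← hFfb]
      simp [hrs]
    intro x y hxy
    obtain ⟨gx, rfl⟩ := Submodule.Quotient.mk_surjective _ x
    obtain ⟨gy, rfl⟩ := Submodule.Quotient.mk_surjective _ y
    simp only [] at hxy
    rw [← Submodule.Quotient.mk_smul, ← Submodule.Quotient.mk_smul] at hxy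
    rw [Submodule.Quotient.eq] at hxy
    rw [hsmul_top, htake t (le_of_lt htlen)] at hxy
    have hmem : FS.fb a ⟨t, htlen⟩ * (gx - gy) ∈ FS.Jid a S ∅ := by
      have : rs[t] • gx - rs[t] • gy = FS.fb a ⟨t, htlen⟩ * (gx - gy) := by
        rw [hget, smul_eq_mul, smul_eq_mul]; ring
      rwa [this] at hxy
    have := hnzd _ hmem
    rw [Submodule.Quotient.eq, hsmul_top, htake t (le_of_lt htlen)]
    exact this
  · -- properness
    intro htop
    have h1 : (1 : MvPolynomial (Fin n) ℂ) ∈ Ideal.ofList rs := by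
      have : (1 : MvPolynomial (Fin n) ℂ)
          ∈ (⊤ : Submodule (MvPolynomial (Fin n) ℂ) (MvPolynomial (Fin n) ℂ)) := trivial
      rw [htop, hsmul_top] at this
      exact this
    have hker : Ideal.ofList rs ≤ RingHom.ker (MvPolynomial.aeval (fun _ : Fin n => (1:ℂ))).toRingHom := by
      rw [Ideal.ofList, Ideal.span_le]
      intro x hx
      simp only [Set.mem_setOf_eq] at hx
      rw [hrs, List.mem_ofFn] at hx
      obtain ⟨i, rfl⟩ := hx
      rw [SetLike.mem_coe, RingHom.mem_ker]
      simp [hF]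
    have := hker h1
    rw [RingHom.mem_ker] at this
    simp at this
end

section
/- With the notation of the deformation datum, the cone σ̃ satisfies σ̃ ∩ (ℝⁿ × {0}) = σ × {0}; that is, intersecting σ̃ with the subspace ℝⁿ × {0} of ℝⁿ × ℝᵏ recovers the cone σ. -/
open Set Pointwise

/-- The conical hull of a set `S`: all finite nonnegative linear combinations of
elements of `S`. -/
def coneHull {V : Type*} [AddCommMonoid V] [Module ℝ V] (S : Set V) : Set V :=
  {x | ∃ (m : ℕ) (c : Fin m → ℝ) (v : Fin m → V),
    (∀ i, 0 ≤ c i) ∧ (∀ i, v i ∈ S) ∧ x = ∑ i, c i • v i}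

/-- A vector of `ℝᵐ` is integral if all of its coordinates are integers, i.e. it lies in
the lattice `ℤᵐ`. -/
def IsIntegralVec {m : ℕ} (v : Fin m → ℝ) : Prop := ∀ j, ∃ z : ℤ, v j = (z : ℝ)

/-- A vector of `ℝᵐ` is rational if all of its coordinates are rational, i.e. it lies in
`ℚᵐ`. -/
def IsRationalVec {m : ℕ} (v : Fin m → ℝ) : Prop := ∀ j, ∃ q : ℚ, v j = (q : ℝ)

/-- The standard pairing `⟨u, v⟩ = ∑ j, u j * v j` on `ℝᵐ`. -/
def dot {m : ℕ} (u v : Fin m → ℝ) : ℝ := ∑ j, u j * v j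

section Aux

open Set Pointwise Finset

variable {V : Type*} [AddCommMonoid V] [Module ℝ V] {S : Set V}

theorem coneHull_zero_mem (S : Set V) : (0 : V) ∈ coneHull S :=
  ⟨0, fun i => 0, fun i => i.elim0, fun i => le_refl _, fun i => i.elim0, by simp⟩

theorem subset_coneHull (S : Set V) : S ⊆ coneHull S := fun x hx =>
  ⟨1, fun _ => 1, fun _ => x, fun _ => zero_le_one, fun _ => hx, by simp⟩

theorem coneHull_smul_mem {a : ℝ} (ha : 0 ≤ a) {x : V} (hx : x ∈ coneHull S) :
    a • x ∈ coneHull S := by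
  obtain ⟨m, c, v, h1, h2, h3⟩ := hx
  exact ⟨m, fun i => a * c i, v, fun i => mul_nonneg ha (h1 i), h2, by
    rw [h3, Finset.smul_sum]; simp [smul_smul]⟩

theorem coneHull_add_mem {x y : V} (hx : x ∈ coneHull S) (hy : y ∈ coneHull S) :
    x + y ∈ coneHull S := by
  obtain ⟨m, c, v, h1, h2, h3⟩ := hx
  obtain ⟨m', c', v', h1', h2', h3'⟩ := hy
  refine ⟨m + m', Fin.addCases c c', Fin.addCases v v', ?_, ?_, ?_⟩
  · intro i
    refine Fin.addCases (fun i => ?_) (fun i => ?_) i <;> simp [h1, h1']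
  · intro i
    refine Fin.addCases (fun i => ?_) (fun i => ?_) i <;> simp [h2 _, h2' _]
  · rw [Fin.sum_univ_add, h3, h3']
    simp

theorem coneHull_sum_mem {ι : Type*} (s : Finset ι) (f : ι → V)
    (hf : ∀ i ∈ s, f i ∈ coneHull S) : ∑ i ∈ s, f i ∈ coneHull S :=
  Finset.sum_induction f (· ∈ coneHull S) (fun _ _ ha hb => coneHull_add_mem ha hb)
    (coneHull_zero_mem S) hf

theorem coneHull_convex (S : Set V) : Convex ℝ (coneHull S) := by
  intro x hx y hy a b ha hb _
  exact coneHull_add_mem (coneHull_smul_mem ha hx) (coneHull_smul_mem hb hy)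

/-- Membership in a finite pointwise sum of sets. -/
theorem mem_finset_set_sum {ι : Type*} (s : Finset ι) (F : ι → Set V) (f : ι → V)
    (hf : ∀ i ∈ s, f i ∈ F i) : ∑ i ∈ s, f i ∈ ∑ i ∈ s, F i := by
  classical
  induction s using Finset.induction_on with
  | empty => simp
  | insert a s' h ih =>
    rw [Finset.sum_insert h, Finset.sum_insert h]
    exact Set.add_mem_add (hf _ (Finset.mem_insert_self _ _))
      (ih fun i hi => hf i (Finset.mem_insert_of_mem hi))

theorem convex_rep {W : Type*} [AddCommGroup W] [Module ℝ W]
    {C : Set W} (hC : Convex ℝ C) {ι : Type*} (s : Finset ι)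
    (c : ι → ℝ) (p : ι → W) (hc : ∀ i ∈ s, 0 ≤ c i) (hp : ∀ i ∈ s, p i ∈ C)
    (ht : 0 < ∑ i ∈ s, c i) :
    ∃ q ∈ C, ∑ i ∈ s, c i • p i = (∑ i ∈ s, c i) • q := by
  set t := ∑ i ∈ s, c i with htdef
  set y := ∑ i ∈ s, c i • p i with hydef
  have key : t • t⁻¹ • y = y := smul_inv_smul₀ ht.ne' y
  refine ⟨t⁻¹ • y, ?_, key.symm⟩
  have : t⁻¹ • y = ∑ i ∈ s, (c i / t) • p i := by
    rw [hydef]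
    rw [Finset.smul_sum]
    refine Finset.sum_congr rfl fun i _ => ?_
    rw [div_eq_inv_mul, mul_smul]
  rw [this]
  refine hC.sum_mem (fun i hi => div_nonneg (hc i hi) ht.le) ?_ hp
  rw [← Finset.sum_div, div_self ht.ne']

end Aux

/-- A deformation datum for `(ℤⁿ, σ)` (Mavlyutov/Altmann): a Minkowski decomposition
`Q = Q₀ + Q₁ + ⋯ + Q_k` of a polyhedron `Q` inside the full-dimensional strongly convex
rational polyhedral cone `σ ⊆ ℝⁿ`, together with an integral functional `w`, subject to
conditions (i), (ii), (iii), (iv'), (v), (vi). The sets `Q₀, …, Q_k` are indexed by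
`Fin (k+1)`, and `Qᵢ = conv(Vᵢ) + coneHull(Rᵢ)` with `Vᵢ` a finite nonempty set of
rational points equal to the set of extreme points of `Qᵢ` and `Rᵢ` a finite set of
rational points. -/
structure DeformationDatum (n k : ℕ) where
  /-- Finite set of lattice generators of `σ`. -/
  S₀ : Finset (Fin n → ℝ)
  hS₀ : ∀ v ∈ S₀, IsIntegralVec v
  /-- The cone `σ`. -/
  σ : Set (Fin n → ℝ)
  hσ : σ = coneHull (S₀ : Set (Fin n → ℝ))
  /-- `σ` is full-dimensional. -/
  hspan : Submodule.span ℝ σ = ⊤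
  /-- `σ` is strongly convex. -/
  hsc : σ ∩ (-σ) = {0}
  /-- The integral functional `w`. -/
  w : Fin n → ℝ
  hw : IsIntegralVec w
  /-- Vertex sets `V₀, …, V_k`. -/
  V : Fin (k + 1) → Finset (Fin n → ℝ)
  /-- Recession generator sets `R₀, …, R_k`. -/
  R : Fin (k + 1) → Finset (Fin n → ℝ)
  hVne : ∀ i, (V i).Nonempty
  hVQ : ∀ i, ∀ v ∈ V i, IsRationalVec v
  hRQ : ∀ i, ∀ v ∈ R i, IsRationalVec v
  /-- The summands `Q₀, …, Q_k`. -/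
  Qi : Fin (k + 1) → Set (Fin n → ℝ)
  hQi : ∀ i, Qi i = convexHull ℝ (V i : Set (Fin n → ℝ)) + coneHull (R i : Set (Fin n → ℝ))
  hVext : ∀ i, (V i : Set (Fin n → ℝ)) = Set.extremePoints ℝ (Qi i)
  /-- The polyhedron `Q`. -/
  Q : Set (Fin n → ℝ)
  /-- (i) `Q ⊆ σ`. -/
  h1 : Q ⊆ σ
  /-- (ii) `0 ∉ Q`. -/
  h2 : (0 : Fin n → ℝ) ∉ Q
  /-- (iii) `Q = Q₀ + Q₁ + ⋯ + Q_k`. -/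
  h3 : Q = ∑ i : Fin (k + 1), Qi i
  /-- (iv') every extreme point of `Q` decomposes as a sum of extreme points of the `Qᵢ`,
  at most one of which is non-integral. -/
  h4' : ∀ v ∈ Set.extremePoints ℝ Q, ∃ vi : Fin (k + 1) → (Fin n → ℝ),
    (∀ i, vi i ∈ Set.extremePoints ℝ (Qi i)) ∧ v = ∑ i, vi i ∧
    ({i | ¬ IsIntegralVec (vi i)} : Set (Fin (k + 1))).Subsingleton
  /-- (v) the minimum of `⟨w, ·⟩` on `Q` is attained and is `≥ -1`. -/
  h5 : ∃ μ : ℝ, IsLeast ((fun x => dot w x) '' Q) μ ∧ -1 ≤ μ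
  /-- (vi) every extreme point of `σ ∩ {⟨w, ·⟩ = -1}` lies in `ℝ⁺ · Q`. -/
  h6 : ∀ v ∈ Set.extremePoints ℝ (σ ∩ {x | dot w x = -1}),
    ∃ lam : ℝ, ∃ q ∈ Q, 0 < lam ∧ v = lam • q

/-- The generating set of the cone `σ̃ ⊆ ℝⁿ × ℝᵏ`:
`(σ × {0}) ∪ {(q, -e₁-⋯-e_k) : q ∈ Q₀} ∪ {(q, eᵢ) : q ∈ Qᵢ, i = 1, …, k}`. -/
def tildeGens {n k : ℕ} (D : DeformationDatum n k) : Set ((Fin n → ℝ) × (Fin k → ℝ)) :=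
  (D.σ ×ˢ ({0} : Set (Fin k → ℝ)))
    ∪ {p | p.1 ∈ D.Qi 0 ∧ p.2 = fun _ => (-1 : ℝ)}
    ∪ ⋃ i : Fin k, {p | p.1 ∈ D.Qi i.succ ∧ p.2 = Pi.single i 1}

/-- The cone `σ̃ ⊆ ℝⁿ × ℝᵏ` associated to a deformation datum. -/
def tildeSigma {n k : ℕ} (D : DeformationDatum n k) : Set ((Fin n → ℝ) × (Fin k → ℝ)) :=
  coneHull (tildeGens D)

/-- Intersecting `σ̃` with the subspace `ℝⁿ × {0}` of `ℝⁿ × ℝᵏ` recovers the cone `σ`: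
`σ̃ ∩ (ℝⁿ × {0}) = σ × {0}`. -/
theorem tildeSigma_inter_base (n k : ℕ) (hk : 1 ≤ k) (D : DeformationDatum n k) :
    tildeSigma D ∩ (Set.univ ×ˢ ({0} : Set (Fin k → ℝ)))
      = D.σ ×ˢ ({0} : Set (Fin k → ℝ)) := by
  classical
  ext ⟨a, b⟩
  simp only [Set.mem_inter_iff, Set.mem_prod, Set.mem_univ, true_and,
    Set.mem_singleton_iff]
  constructor
  · rintro ⟨hmem, hb⟩
    subst hb
    refine ⟨?_, rfl⟩
    obtain ⟨m, c, v, hc, hv, hx⟩ := hmem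
    -- basic facts about σ
    have hσ_smul : ∀ (r : ℝ) (x : Fin n → ℝ), 0 ≤ r → x ∈ D.σ → r • x ∈ D.σ := by
      intro r x hr hx'
      rw [D.hσ] at hx' ⊢
      exact coneHull_smul_mem hr hx'
    have hσ_add : ∀ x y : Fin n → ℝ, x ∈ D.σ → y ∈ D.σ → x + y ∈ D.σ := by
      intro x y hx' hy'
      rw [D.hσ] at hx' hy' ⊢
      exact coneHull_add_mem hx' hy'
    have hσ_sum : ∀ (s : Finset (Fin m)) (f : Fin m → (Fin n → ℝ)),
        (∀ i ∈ s, f i ∈ D.σ) → ∑ i ∈ s, f i ∈ D.σ := by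
      intro s f hf
      rw [D.hσ]
      refine coneHull_sum_mem s f fun i hi => ?_
      have := hf i hi
      rwa [D.hσ] at this
    have hQconv : ∀ i : Fin (k + 1), Convex ℝ (D.Qi i) := by
      intro i
      rw [D.hQi]
      exact (convex_convexHull ℝ _).add (coneHull_convex _)
    -- distinctness of the second coordinates
    have hne1 : (fun _ : Fin k => (-1 : ℝ)) ≠ (0 : Fin k → ℝ) := by
      intro h
      have := congrFun h ⟨0, hk⟩
      norm_num at this
    -- trichotomy for each generator
    have htri : ∀ i : Fin m, ((v i).1 ∈ D.σ ∧ (v i).2 = 0)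
        ∨ ((v i).1 ∈ D.Qi 0 ∧ (v i).2 = (fun _ => (-1 : ℝ)))
        ∨ ∃ j : Fin k, (v i).1 ∈ D.Qi j.succ ∧ (v i).2 = Pi.single j 1 := by
      intro i
      have hvi := hv i
      simp only [tildeGens, Set.mem_union, Set.mem_iUnion, Set.mem_prod,
        Set.mem_singleton_iff, Set.mem_setOf_eq] at hvi
      rcases hvi with (⟨h1, h2⟩ | h) | ⟨j, h⟩
      · exact Or.inl ⟨h1, h2⟩
      · exact Or.inr (Or.inl h)
      · exact Or.inr (Or.inr ⟨j, h.1, h.2⟩)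
    -- classification function
    have hchoice : ∀ i : Fin m, ∃ o : Option (Fin (k + 1)),
        ((o = none) ∧ (v i).1 ∈ D.σ ∧ (v i).2 = 0) ∨
        ((o = some 0) ∧ (v i).1 ∈ D.Qi 0 ∧ (v i).2 = (fun _ => (-1 : ℝ))) ∨
        (∃ j : Fin k, o = some j.succ ∧ (v i).1 ∈ D.Qi j.succ ∧
          (v i).2 = Pi.single j 1) := by
      intro i
      rcases htri i with h | h | ⟨j, h⟩
      · exact ⟨none, Or.inl ⟨rfl, h⟩⟩
      · exact ⟨some 0, Or.inr (Or.inl ⟨rfl, h⟩)⟩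
      · exact ⟨some j.succ, Or.inr (Or.inr ⟨j, rfl, h⟩)⟩
    choose κ hκ using hchoice
    have hbase : ∀ i, κ i = none → (v i).1 ∈ D.σ ∧ (v i).2 = 0 := by
      intro i hi
      rcases hκ i with ⟨_, h⟩ | ⟨ho, _⟩ | ⟨j, ho, _⟩
      · exact h
      · rw [hi] at ho; exact nomatch ho
      · rw [hi] at ho; exact nomatch ho
    have hQ0 : ∀ i, κ i = some 0 →
        (v i).1 ∈ D.Qi 0 ∧ (v i).2 = (fun _ => (-1 : ℝ)) := by
      intro i hi
      rcases hκ i with ⟨ho, _⟩ | ⟨_, h⟩ | ⟨j, ho, _⟩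
      · rw [hi] at ho; exact nomatch ho
      · exact h
      · rw [hi] at ho
        have h0 : (0 : Fin (k + 1)) = j.succ := Option.some_injective _ ho
        exact absurd h0.symm (Fin.succ_ne_zero j)
    have hQsucc : ∀ i (j : Fin k), κ i = some j.succ →
        (v i).1 ∈ D.Qi j.succ ∧ (v i).2 = Pi.single j 1 := by
      intro i j hi
      rcases hκ i with ⟨ho, _⟩ | ⟨ho, _⟩ | ⟨j', ho, h⟩
      · rw [hi] at ho; exact nomatch ho
      · rw [hi] at ho
        have h0 : j.succ = (0 : Fin (k + 1)) := Option.some_injective _ ho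
        exact absurd h0 (Fin.succ_ne_zero j)
      · rw [hi] at ho
        have h0 : j.succ = j'.succ := Option.some_injective _ ho
        have : j = j' := Fin.succ_inj.mp h0
        rw [this]
        exact h
    -- masses
    set T : Option (Fin (k + 1)) → ℝ :=
      fun o => ∑ i ∈ Finset.univ.filter (fun i => κ i = o), c i with hT
    have hTnonneg : ∀ o, 0 ≤ T o := fun o =>
      Finset.sum_nonneg fun i _ => hc i
    -- second coordinate equation
    have hb2 : ∀ j : Fin k, (0 : ℝ) = ∑ i : Fin m, c i * (v i).2 j := by
      intro j
      have h2 := congrArg Prod.snd hx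
      simp only [Prod.snd_sum, Prod.smul_snd] at h2
      have h3 := congrFun h2 j
      simpa [Finset.sum_apply] using h3
    have hmass : ∀ j : Fin k, T (some j.succ) = T (some 0) := by
      intro j
      have h0 := hb2 j
      rw [← Finset.sum_fiberwise Finset.univ κ (fun i => c i * (v i).2 j),
        Fintype.sum_option] at h0
      have hnone : ∑ i ∈ Finset.univ.filter (fun i => κ i = none),
          c i * (v i).2 j = 0 := by
        refine Finset.sum_eq_zero fun i hi => ?_
        rw [(hbase i (Finset.mem_filter.mp hi).2).2]
        simp
      rw [hnone, zero_add, Fin.sum_univ_succ] at h0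
      have hzero : ∑ i ∈ Finset.univ.filter (fun i => κ i = some 0),
          c i * (v i).2 j = -(T (some 0)) := by
        rw [hT, ← Finset.sum_neg_distrib]
        refine Finset.sum_congr rfl fun i hi => ?_
        rw [(hQ0 i (Finset.mem_filter.mp hi).2).2]
        ring
      have hsucc : ∀ j' : Fin k, ∑ i ∈ Finset.univ.filter (fun i => κ i = some j'.succ),
          c i * (v i).2 j = if j' = j then T (some j'.succ) else 0 := by
        intro j'
        by_cases hjj : j' = j
        · subst hjj
          rw [if_pos rfl, hT]
          refine Finset.sum_congr rfl fun i hi => ?_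
          rw [(hQsucc i j' (Finset.mem_filter.mp hi).2).2]
          simp
        · rw [if_neg hjj]
          refine Finset.sum_eq_zero fun i hi => ?_
          rw [(hQsucc i j' (Finset.mem_filter.mp hi).2).2]
          simp [Pi.single_apply, hjj]
      rw [hzero, Finset.sum_congr rfl (fun j' _ => hsucc j')] at h0
      rw [Finset.sum_ite_eq' Finset.univ j
        (fun j' => T (some j'.succ))] at h0
      simp only [Finset.mem_univ, if_pos] at h0
      linarith
    -- first coordinate
    have hx1 : a = ∑ i : Fin m, c i • (v i).1 := by
      have h1 := congrArg Prod.fst hx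
      simpa [Prod.fst_sum, Prod.smul_fst] using h1
    rw [hx1, ← Finset.sum_fiberwise Finset.univ κ (fun i => c i • (v i).1),
      Fintype.sum_option, Fin.sum_univ_succ]
    have hSnone : ∑ i ∈ Finset.univ.filter (fun i => κ i = none),
        c i • (v i).1 ∈ D.σ := by
      refine hσ_sum _ _ fun i hi => ?_
      exact hσ_smul _ _ (hc i) (hbase i (Finset.mem_filter.mp hi).2).1
    refine hσ_add _ _ hSnone ?_
    rcases eq_or_lt_of_le (hTnonneg (some 0)) with ht0 | ht0
    · -- total mass zero: all nonbase coefficients vanish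
      have hz : ∀ o : Option (Fin (k + 1)), T o = 0 →
          ∑ i ∈ Finset.univ.filter (fun i => κ i = o), c i • (v i).1 = 0 := by
        intro o ho
        refine Finset.sum_eq_zero fun i hi => ?_
        have ho' : ∑ i ∈ Finset.univ.filter (fun i => κ i = o), c i = 0 := ho
        rw [(Finset.sum_eq_zero_iff_of_nonneg (fun i _ => hc i)).mp ho' i hi, zero_smul]
      rw [hz (some 0) ht0.symm]
      have : ∀ j : Fin k, ∑ i ∈ Finset.univ.filter (fun i => κ i = some j.succ),
          c i • (v i).1 = 0 := fun j => hz _ ((hmass j).trans ht0.symm)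
      rw [Finset.sum_congr rfl fun j _ => this j]
      simp only [Finset.sum_const_zero, add_zero, zero_add]
      rw [D.hσ]
      exact coneHull_zero_mem _
    · -- positive mass
      obtain ⟨q0, hq0, hS0⟩ := convex_rep (hQconv 0)
        (Finset.univ.filter (fun i => κ i = some 0)) c (fun i => (v i).1)
        (fun i _ => hc i)
        (fun i hi => (hQ0 i (Finset.mem_filter.mp hi).2).1) ht0
      have hqsucc : ∀ j : Fin k, ∃ q ∈ D.Qi j.succ,
          ∑ i ∈ Finset.univ.filter (fun i => κ i = some j.succ), c i • (v i).1
            = T (some 0) • q := by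
        intro j
        have htj : 0 < ∑ i ∈ Finset.univ.filter (fun i => κ i = some j.succ), c i := by
          have h' : ∑ i ∈ Finset.univ.filter (fun i => κ i = some j.succ), c i
              = T (some 0) := hmass j
          rw [h']
          exact ht0
        obtain ⟨q, hq, hSq⟩ := convex_rep (hQconv j.succ)
          (Finset.univ.filter (fun i => κ i = some j.succ)) c (fun i => (v i).1)
          (fun i _ => hc i)
          (fun i hi => (hQsucc i j (Finset.mem_filter.mp hi).2).1) htj
        refine ⟨q, hq, ?_⟩
        rw [hSq]
        congr 1
        exact hmass j
      choose qs hqs hSqs using hqsucc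
      set Q' : Fin (k + 1) → (Fin n → ℝ) := Fin.cases q0 qs with hQ'
      have hsum_mem : ∑ i : Fin (k + 1), Q' i ∈ D.Q := by
        rw [D.h3]
        refine mem_finset_set_sum Finset.univ D.Qi Q' fun i _ => ?_
        refine Fin.cases ?_ ?_ i
        · simpa [hQ'] using hq0
        · intro j
          simpa [hQ'] using hqs j
      have key : (∑ i ∈ Finset.univ.filter (fun i => κ i = some 0), c i • (v i).1)
          + ∑ j : Fin k, ∑ i ∈ Finset.univ.filter (fun i => κ i = some j.succ),
              c i • (v i).1
          = T (some 0) • ∑ i : Fin (k + 1), Q' i := by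
        rw [Fin.sum_univ_succ, smul_add, Finset.smul_sum]
        have h1 : (∑ i ∈ Finset.univ.filter (fun i => κ i = some 0), c i • (v i).1)
            = T (some 0) • Q' 0 := by
          rw [hS0]
          rfl
        have h2 : ∀ j : Fin k,
            (∑ i ∈ Finset.univ.filter (fun i => κ i = some j.succ), c i • (v i).1)
            = T (some 0) • Q' j.succ := by
          intro j
          rw [hSqs j]
          congr 1
        rw [h1, Finset.sum_congr rfl fun j _ => h2 j]
      rw [key]
      exact hσ_smul _ _ (hTnonneg (some 0)) (D.h1 hsum_mem)
  · rintro ⟨ha, hb⟩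
    refine ⟨subset_coneHull _ (Or.inl (Or.inl ⟨ha, hb⟩)), hb⟩
end

section
/- With the notation of the deformation datum, σ̃ equals the conical hull of the finite set of rational points (S₀ × {0}) ∪ {(v, −e₁ − ⋯ − e_k) : v ∈ V₀} ∪ {(v, eᵢ) : v ∈ Vᵢ, 1 ≤ i ≤ k}; in particular σ̃ is a rational polyhedral cone. Moreover σ̃ spans ℝⁿ × ℝᵏ, i.e. σ̃ has dimension n + k. -/
open Set Pointwise

theorem coneHull_eq_span {V : Type*} [AddCommGroup V] [Module ℝ V] (S : Set V) :
    coneHull S = (Submodule.span {c : ℝ // 0 ≤ c} S : Set V) := by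
  apply Set.Subset.antisymm
  · rintro x ⟨m, c, v, hc, hv, rfl⟩
    exact Submodule.sum_mem _ fun i _ =>
      Submodule.smul_mem _ (⟨c i, hc i⟩ : {c : ℝ // 0 ≤ c}) (Submodule.subset_span (hv i))
  · intro x hx
    induction hx using Submodule.span_induction with
    | mem y hy => exact ⟨1, fun _ => 1, fun _ => y, fun _ => zero_le_one, fun _ => hy, by simp⟩
    | zero => exact ⟨0, ![], ![], fun i => i.elim0, fun i => i.elim0, by simp⟩
    | add a b _ _ ha hb =>
      obtain ⟨m₁, c₁, v₁, hc₁, hv₁, rfl⟩ := ha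
      obtain ⟨m₂, c₂, v₂, hc₂, hv₂, rfl⟩ := hb
      refine ⟨m₁ + m₂, Fin.addCases c₁ c₂, Fin.addCases v₁ v₂, ?_, ?_, ?_⟩
      · intro i; induction i using Fin.addCases with
        | left i => simpa using hc₁ i
        | right i => simpa using hc₂ i
      · intro i; induction i using Fin.addCases with
        | left i => simpa using hv₁ i
        | right i => simpa using hv₂ i
      · rw [Fin.sum_univ_add]; simp
    | smul t a _ ha =>
      obtain ⟨m, c, v, hc, hv, rfl⟩ := ha
      refine ⟨m, fun i => (t : ℝ) * c i, v, fun i => mul_nonneg t.2 (hc i), hv, ?_⟩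
      rw [Finset.smul_sum]
      exact Finset.sum_congr rfl fun i _ => by rw [← smul_smul]; rfl

theorem smul_mem_span_nonneg {V : Type*} [AddCommGroup V] [Module ℝ V]
    {p : Submodule {c : ℝ // 0 ≤ c} V} {t : ℝ} (ht : 0 ≤ t) {x : V} (hx : x ∈ p) :
    t • x ∈ p := p.smul_mem (⟨t, ht⟩ : {c : ℝ // 0 ≤ c}) hx

theorem convex_span_nonneg {V : Type*} [AddCommGroup V] [Module ℝ V]
    (p : Submodule {c : ℝ // 0 ≤ c} V) : Convex ℝ (p : Set V) :=
  fun _ hx _ hy a b ha hb _ => p.add_mem (smul_mem_span_nonneg ha hx) (smul_mem_span_nonneg hb hy)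

theorem convexHull_subset_span_nonneg {V : Type*} [AddCommGroup V] [Module ℝ V] {S : Set V} :
    convexHull ℝ S ⊆ (Submodule.span {c : ℝ // 0 ≤ c} S : Set V) :=
  convexHull_min Submodule.subset_span (convex_span_nonneg _)


theorem isClosed_coneHull_of_pointed {n : ℕ} (S : Finset (Fin n → ℝ))
    (hp : coneHull (S : Set (Fin n → ℝ)) ∩ (-(coneHull (S : Set (Fin n → ℝ)))) = {0}) :
    IsClosed (coneHull (S : Set (Fin n → ℝ))) := by
  classical
  set S₁ : Set (Fin n → ℝ) := (S : Set (Fin n → ℝ)) \ {0} with hS₁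
  have hspan₁ : Submodule.span {c : ℝ // 0 ≤ c} (S : Set (Fin n → ℝ))
      = Submodule.span {c : ℝ // 0 ≤ c} S₁ := by
    apply le_antisymm
    · rw [Submodule.span_le]
      intro v hv
      by_cases h0 : v = 0
      · simp [h0]
      · exact Submodule.subset_span ⟨hv, h0⟩
    · exact Submodule.span_mono (Set.diff_subset)
  rcases S₁.eq_empty_or_nonempty with hS₁e | hS₁ne
  · rw [coneHull_eq_span, hspan₁, hS₁e, Submodule.span_empty, Submodule.bot_coe]
    exact isClosed_singleton
  -- 0 is not in the convex hull of S₁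
  have h0K : (0 : Fin n → ℝ) ∉ convexHull ℝ S₁ := by
    intro h0
    rw [convexHull_eq] at h0
    obtain ⟨ι, t, w, z, hw0, hw1, hzS, hcm⟩ := h0
    obtain ⟨i₀, hi₀t, hi₀⟩ := Finset.exists_ne_zero_of_sum_ne_zero
      (by rw [hw1]; exact one_ne_zero)
    have hwi₀ : 0 < w i₀ := lt_of_le_of_ne (hw0 i₀ hi₀t) (Ne.symm hi₀)
    have hsum : ∑ i ∈ t, w i • z i = 0 := by
      rw [Finset.centerMass_eq_of_sum_1 _ _ hw1] at hcm; exact hcm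
    have hsplit : w i₀ • z i₀ + ∑ i ∈ t.erase i₀, w i • z i = 0 :=
      (Finset.add_sum_erase t (fun i => w i • z i) hi₀t).trans hsum
    have hmem : w i₀ • z i₀ ∈ coneHull (S : Set (Fin n → ℝ)) := by
      rw [coneHull_eq_span]
      exact smul_mem_span_nonneg (le_of_lt hwi₀) (Submodule.subset_span (hzS i₀ hi₀t).1)
    have hmemneg : w i₀ • z i₀ ∈ -(coneHull (S : Set (Fin n → ℝ))) := by
      rw [Set.mem_neg, coneHull_eq_span]
      have : -(w i₀ • z i₀) = ∑ i ∈ t.erase i₀, w i • z i := by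
        rw [neg_eq_iff_add_eq_zero]; exact hsplit
      rw [this]
      exact Submodule.sum_mem _ fun i hi =>
        smul_mem_span_nonneg (hw0 i (Finset.mem_of_mem_erase hi))
          (Submodule.subset_span (hzS i (Finset.mem_of_mem_erase hi)).1)
    have : w i₀ • z i₀ ∈ ({0} : Set (Fin n → ℝ)) := hp ▸ ⟨hmem, hmemneg⟩
    rcases smul_eq_zero.mp this with h | h
    · exact absurd h (ne_of_gt hwi₀)
    · exact (hzS i₀ hi₀t).2 h
  set K := convexHull ℝ S₁ with hK
  have Kfin : S₁.Finite := S.finite_toSet.diff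
  have Kc : IsCompact K := Kfin.isCompact_convexHull (𝕜 := ℝ)
  have Kne : K.Nonempty := hS₁ne.mono (subset_convexHull ℝ S₁)
  obtain ⟨x₀, hx₀K, hmin'⟩ := Kc.exists_isMinOn Kne (continuous_norm.continuousOn (s := K))
  have hmin : ∀ y ∈ K, ‖x₀‖ ≤ ‖y‖ := fun y hy => hmin' hy
  set δ := ‖x₀‖ with hδ
  have δpos : 0 < δ := norm_pos_iff.mpr (fun h => h0K (h ▸ hx₀K))
  have Ksub : K ⊆ coneHull (S : Set (Fin n → ℝ)) := by
    rw [coneHull_eq_span, hspan₁]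
    exact convexHull_subset_span_nonneg
  -- representation: every element of the cone is t • y with y ∈ K
  have rep : ∀ x ∈ coneHull (S : Set (Fin n → ℝ)), ∃ t : ℝ, 0 ≤ t ∧ ∃ y ∈ K, x = t • y := by
    intro x hx
    rw [coneHull_eq_span, hspan₁, ← coneHull_eq_span] at hx
    obtain ⟨m, c, v, hc, hv, rfl⟩ := hx
    rcases eq_or_lt_of_le (Finset.sum_nonneg fun i _ => hc i) with hts | hts
    · refine ⟨0, le_refl _, Kne.some, Kne.some_mem, ?_⟩
      have : ∀ i ∈ Finset.univ, c i = 0 :=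
        (Finset.sum_eq_zero_iff_of_nonneg fun i _ => hc i).mp hts.symm
      simp only [zero_smul]
      exact Finset.sum_eq_zero fun i hi => by rw [this i hi, zero_smul]
    · refine ⟨∑ i, c i, le_of_lt hts, Finset.centerMass Finset.univ c v,
        Finset.centerMass_mem_convexHull _ (fun i _ => hc i) hts (fun i _ => hv i), ?_⟩
      rw [Finset.centerMass, smul_smul, mul_inv_cancel₀ (ne_of_gt hts), one_smul]
  apply isClosed_of_closure_subset
  intro x hx
  set B := (‖x‖ + 1) / δ with hB
  set CB := (fun p : ℝ × (Fin n → ℝ) => p.1 • p.2) '' ((Set.Icc (0:ℝ) B) ×ˢ K) with hCB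
  have CBc : IsCompact CB := (isCompact_Icc.prod Kc).image continuous_smul
  have CBsub : CB ⊆ coneHull (S : Set (Fin n → ℝ)) := by
    rintro _ ⟨⟨t, y⟩, ⟨⟨ht0, _⟩, hy⟩, rfl⟩
    rw [coneHull_eq_span]
    have hy' := Ksub hy
    rw [coneHull_eq_span] at hy'
    exact smul_mem_span_nonneg ht0 hy'
  have sub : ∀ z ∈ coneHull (S : Set (Fin n → ℝ)), ‖z‖ ≤ ‖x‖ + 1 → z ∈ CB := by
    intro z hz hnz
    obtain ⟨t, ht0, y, hyK, rfl⟩ := rep z hz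
    have hy0 : δ ≤ ‖y‖ := hmin y hyK
    have htB : t ≤ B := by
      rw [hB, le_div_iff₀ δpos]
      calc t * δ ≤ t * ‖y‖ := mul_le_mul_of_nonneg_left hy0 ht0
        _ = ‖t • y‖ := by rw [norm_smul, Real.norm_eq_abs, abs_of_nonneg ht0]
        _ ≤ ‖x‖ + 1 := hnz
    exact ⟨(t, y), ⟨⟨ht0, htB⟩, hyK⟩, rfl⟩
  have hxCB : x ∈ CB := by
    apply CBc.isClosed.closure_subset
    rw [Metric.mem_closure_iff]
    intro ε εpos
    obtain ⟨z, hzσ, hdz⟩ := Metric.mem_closure_iff.mp hx (min ε 1) (lt_min εpos one_pos)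
    refine ⟨z, sub z hzσ ?_, lt_of_lt_of_le hdz (min_le_left _ _)⟩
    have h1 : ‖z‖ - ‖x‖ ≤ ‖z - x‖ := norm_sub_norm_le z x
    have h2 : ‖z - x‖ = dist x z := by rw [dist_comm, dist_eq_norm]
    have h3 : dist x z < 1 := lt_of_lt_of_le hdz (min_le_right _ _)
    linarith
  exact CBsub hxCB

theorem pair_mem_span {n m : ℕ} {F : Finset (Fin n → ℝ)} {a : Fin n → ℝ}
    (ha : a ∈ convexHull ℝ (F : Set (Fin n → ℝ))) (c : Fin m → ℝ)
    {T : Set ((Fin n → ℝ) × (Fin m → ℝ))} (hT : ∀ v ∈ F, ((v, c)) ∈ T) :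
    ((a, c) : (Fin n → ℝ) × (Fin m → ℝ)) ∈ Submodule.span {c : ℝ // 0 ≤ c} T := by
  rw [Finset.convexHull_eq] at ha
  obtain ⟨wt, hw0, hw1, hcm⟩ := ha
  have key : ((a, c) : (Fin n → ℝ) × (Fin m → ℝ)) = ∑ y ∈ F, wt y • ((y, c)) := by
    rw [Prod.ext_iff]
    constructor
    · rw [Prod.fst_sum]
      simp only [Prod.smul_fst]
      rw [← hcm, Finset.centerMass_eq_of_sum_1 _ id hw1]
      simp
    · rw [Prod.snd_sum]
      simp only [Prod.smul_snd]
      rw [← Finset.sum_smul, hw1, one_smul]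
  rw [key]
  exact Submodule.sum_mem _ fun y hy =>
    smul_mem_span_nonneg (hw0 y hy) (Submodule.subset_span (hT y hy))

/-- `σ̃` equals the conical hull of the finite set of rational points
`(S₀ × {0}) ∪ {(v, -e₁-⋯-e_k) : v ∈ V₀} ∪ {(v, eᵢ) : v ∈ Vᵢ, 1 ≤ i ≤ k}`; in particular
`σ̃` is a rational polyhedral cone. Moreover `σ̃` spans `ℝⁿ × ℝᵏ`, i.e. `σ̃` has
dimension `n + k`. -/
theorem tildeSigma_polyhedral_and_full_dimensional (n k : ℕ) (hk : 1 ≤ k)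
    (D : DeformationDatum n k) :
    tildeSigma D = coneHull (
        ((D.S₀ : Set (Fin n → ℝ)) ×ˢ ({0} : Set (Fin k → ℝ)))
          ∪ {p : (Fin n → ℝ) × (Fin k → ℝ) | p.1 ∈ D.V 0 ∧ p.2 = fun _ => (-1 : ℝ)}
          ∪ ⋃ i : Fin k, {p : (Fin n → ℝ) × (Fin k → ℝ) |
              p.1 ∈ D.V i.succ ∧ p.2 = Pi.single i 1})
      ∧ Submodule.span ℝ (tildeSigma D) = ⊤ := by
  classical
  have hQimem : ∀ i, ∀ v ∈ D.V i, v ∈ D.Qi i := fun i v hv =>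
    extremePoints_subset ((D.hVext i) ▸ (Finset.mem_coe.mpr hv))
  have hQne : ∀ i, ∃ p, p ∈ D.Qi i := fun i => by
    obtain ⟨v, hv⟩ := D.hVne i; exact ⟨v, hQimem i v hv⟩
  choose p hp using hQne
  have hRσ : ∀ i, ∀ r ∈ D.R i, r ∈ D.σ := by
    intro i r hr
    have hσcl : IsClosed D.σ := by
      rw [D.hσ]
      exact isClosed_coneHull_of_pointed D.S₀ (by rw [← D.hσ]; exact D.hsc)
    have key : ∀ c : ℝ, 0 ≤ c → (∑ j, p j) + c • r ∈ D.Q := by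
      intro c hc
      rw [D.h3, mem_fintype_sum]
      refine ⟨fun j => p j + (if j = i then c • r else 0), fun j => ?_, ?_⟩
      · show p j + (if j = i then c • r else 0) ∈ D.Qi j
        by_cases hj : j = i
        · rw [if_pos hj]
          subst hj
          have hpj := hp j
          rw [D.hQi j, Set.mem_add] at hpj ⊢
          obtain ⟨a, haV, b, hbR, hab⟩ := hpj
          refine ⟨a, haV, b + c • r, ?_, by rw [← hab]; abel⟩
          rw [coneHull_eq_span] at hbR ⊢
          exact Submodule.add_mem _ hbR (smul_mem_span_nonneg hc (Submodule.subset_span hr))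
        · rw [if_neg hj, add_zero]; exact hp j
      · rw [Finset.sum_add_distrib]
        simp
    have hmem : ∀ m : ℕ, ((m:ℝ)+1)⁻¹ • (∑ j, p j) + r ∈ D.σ := by
      intro m
      have hm1 : (0:ℝ) < (m:ℝ)+1 := by positivity
      have h1 := D.h1 (key ((m:ℝ)+1) hm1.le)
      have hscale : ((m:ℝ)+1)⁻¹ • ((∑ j, p j) + ((m:ℝ)+1) • r) ∈ D.σ := by
        rw [D.hσ, coneHull_eq_span] at h1 ⊢
        exact smul_mem_span_nonneg (by positivity) h1
      rwa [smul_add, smul_smul, inv_mul_cancel₀ hm1.ne', one_smul] at hscale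
    have htend : Filter.Tendsto (fun m : ℕ => ((m:ℝ)+1)⁻¹ • (∑ j, p j) + r)
        Filter.atTop (nhds r) := by
      have h0 := tendsto_one_div_add_atTop_nhds_zero_nat (𝕜 := ℝ)
      simpa [one_div] using ((h0.smul_const (∑ j, p j)).add (tendsto_const_nhds (x := r)))
    exact hσcl.mem_of_tendsto htend (Filter.Eventually.of_forall hmem)
  have hconeR : ∀ i, ∀ b ∈ coneHull ((D.R i : Set (Fin n → ℝ))), b ∈ D.σ := by
    intro i b hb
    rw [coneHull_eq_span] at hb
    rw [D.hσ, coneHull_eq_span]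
    refine Submodule.span_le.mpr ?_ hb
    intro x hx
    have := hRσ i x hx
    rwa [D.hσ, coneHull_eq_span] at this
  set G : Set ((Fin n → ℝ) × (Fin k → ℝ)) :=
    ((D.S₀ : Set (Fin n → ℝ)) ×ˢ ({0} : Set (Fin k → ℝ)))
      ∪ {p : (Fin n → ℝ) × (Fin k → ℝ) | p.1 ∈ D.V 0 ∧ p.2 = fun _ => (-1 : ℝ)}
      ∪ ⋃ i : Fin k, {p : (Fin n → ℝ) × (Fin k → ℝ) |
          p.1 ∈ D.V i.succ ∧ p.2 = Pi.single i 1} with hGdef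
  have hσG : ∀ x ∈ D.σ, ((x, (0 : Fin k → ℝ)) : (Fin n → ℝ) × (Fin k → ℝ)) ∈
      Submodule.span {c : ℝ // 0 ≤ c} G := by
    intro x hx
    rw [D.hσ, coneHull_eq_span] at hx
    have himg := Submodule.mem_map_of_mem
      (f := LinearMap.inl {c : ℝ // 0 ≤ c} (Fin n → ℝ) (Fin k → ℝ)) hx
    rw [← Submodule.span_image] at himg
    refine Submodule.span_mono ?_ himg
    rintro _ ⟨s, hs, rfl⟩
    exact Or.inl (Or.inl ⟨hs, rfl⟩)
  constructor
  · rw [tildeSigma, coneHull_eq_span, coneHull_eq_span]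
    have heq : Submodule.span {c : ℝ // 0 ≤ c} (tildeGens D) =
        Submodule.span {c : ℝ // 0 ≤ c} G := by
      apply le_antisymm
      · rw [Submodule.span_le]
        rintro ⟨x, y⟩ hxy
        rcases hxy with (h | h) | h
        · obtain ⟨hx, hy⟩ := h
          rw [Set.mem_singleton_iff] at hy
          subst hy
          exact hσG x hx
        · obtain ⟨hx1, hx2⟩ := h
          simp only at hx1 hx2
          subst hx2
          rw [D.hQi 0, Set.mem_add] at hx1
          obtain ⟨a, haV, b, hbR, hab⟩ := hx1
          have hb' := hσG b (hconeR 0 b hbR)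
          have ha' : ((a, fun _ => (-1:ℝ)) : (Fin n → ℝ) × (Fin k → ℝ)) ∈
              Submodule.span {c : ℝ // 0 ≤ c} G :=
            pair_mem_span (T := G) haV (fun _ => (-1:ℝ))
              (fun v hv => Or.inl (Or.inr ⟨hv, rfl⟩))
          have hsum := Submodule.add_mem _ ha' hb'
          have hxeq : ((x, fun _ => (-1:ℝ)) : (Fin n → ℝ) × (Fin k → ℝ))
              = (a, fun _ => (-1:ℝ)) + (b, 0) := by
            rw [Prod.mk_add_mk, add_zero, hab]
          rwa [hxeq]
        · rw [Set.mem_iUnion] at h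
          obtain ⟨i, hi1, hi2⟩ := h
          simp only at hi1 hi2
          subst hi2
          rw [D.hQi i.succ, Set.mem_add] at hi1
          obtain ⟨a, haV, b, hbR, hab⟩ := hi1
          have hb' := hσG b (hconeR i.succ b hbR)
          have ha' : ((a, Pi.single i 1) : (Fin n → ℝ) × (Fin k → ℝ)) ∈
              Submodule.span {c : ℝ // 0 ≤ c} G :=
            pair_mem_span (T := G) haV (Pi.single i 1)
              (fun v hv => Or.inr (Set.mem_iUnion.mpr ⟨i, ⟨hv, rfl⟩⟩))
          have hsum := Submodule.add_mem _ ha' hb'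
          have hxeq : ((x, Pi.single i 1) : (Fin n → ℝ) × (Fin k → ℝ))
              = (a, Pi.single i 1) + (b, 0) := by
            rw [Prod.mk_add_mk, add_zero, hab]
          rwa [hxeq]
      · apply Submodule.span_mono
        rintro ⟨x, y⟩ hxy
        rcases hxy with (h | h) | h
        · obtain ⟨hx, hy⟩ := h
          refine Or.inl (Or.inl ⟨?_, hy⟩)
          rw [D.hσ, coneHull_eq_span]
          exact Submodule.subset_span hx
        · exact Or.inl (Or.inr ⟨hQimem 0 x h.1, h.2⟩)
        · rw [Set.mem_iUnion] at h
          obtain ⟨i, hi⟩ := h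
          exact Or.inr (Set.mem_iUnion.mpr ⟨i, ⟨hQimem i.succ x hi.1, hi.2⟩⟩)
    rw [heq]
  · rw [eq_top_iff]
    rintro ⟨x, y⟩ -
    have hA : ∀ z : Fin n → ℝ, ((z, (0 : Fin k → ℝ)) : (Fin n → ℝ) × (Fin k → ℝ)) ∈
        Submodule.span ℝ (tildeSigma D) := by
      intro z
      have h1 : ((LinearMap.inl ℝ (Fin n → ℝ) (Fin k → ℝ)) '' D.σ) ⊆ tildeSigma D := by
        rintro _ ⟨s, hs, rfl⟩
        have hgen : ((s, (0 : Fin k → ℝ)) : (Fin n → ℝ) × (Fin k → ℝ)) ∈ tildeGens D :=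
          Or.inl (Or.inl ⟨hs, rfl⟩)
        rw [tildeSigma, coneHull_eq_span]
        exact Submodule.subset_span hgen
      have h2 := Submodule.span_mono (R := ℝ) h1
      rw [Submodule.span_image, D.hspan, Submodule.map_top] at h2
      exact h2 (LinearMap.mem_range_self _ z)
    have hE : ∀ i : Fin k, (((0 : Fin n → ℝ), (Pi.single i 1 : Fin k → ℝ)) :
        (Fin n → ℝ) × (Fin k → ℝ)) ∈ Submodule.span ℝ (tildeSigma D) := by
      intro i
      obtain ⟨v, hv⟩ := D.hVne i.succ
      have h1 : ((v, (Pi.single i 1 : Fin k → ℝ)) : (Fin n → ℝ) × (Fin k → ℝ)) ∈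
          tildeSigma D := by
        rw [tildeSigma, coneHull_eq_span]
        exact Submodule.subset_span (Or.inr (Set.mem_iUnion.mpr ⟨i, ⟨hQimem i.succ v hv, rfl⟩⟩))
      have hsub := Submodule.sub_mem _ (Submodule.subset_span h1) (hA v)
      simpa using hsub
    have key : ((x, y) : (Fin n → ℝ) × (Fin k → ℝ))
        = (x, 0) + ∑ i : Fin k, y i •
            (((0 : Fin n → ℝ), (Pi.single i 1 : Fin k → ℝ)) : (Fin n → ℝ) × (Fin k → ℝ)) := by
      rw [Prod.ext_iff]
      constructor
      · rw [Prod.fst_add, Prod.fst_sum]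
        simp
      · rw [Prod.snd_add, Prod.snd_sum]
        simp only [Prod.smul_snd]
        have hsingle : ∀ i : Fin k, y i • (Pi.single i 1 : Fin k → ℝ) = Pi.single i (y i) := by
          intro i
          rw [← Pi.single_smul, smul_eq_mul, mul_one]
        simp_rw [hsingle]
        rw [Finset.univ_sum_single]
        simp
    rw [key]
    exact Submodule.add_mem _ (hA x)
      (Submodule.sum_mem _ fun i _ => Submodule.smul_mem _ _ (hE i))
end

section
/- With the notation of the deformation datum, for every u ∈ ℤⁿ such that ⟨u, x⟩ ≥ 0 for all x ∈ σ, the infima of ⟨u, ·⟩ on Q and on each Qᵢ (i = 0, 1, …, k) are attained, and the floors satisfy ∑_{i=0}^{k} ⌊min_{Qᵢ} ⟨u, ·⟩⌋ = ⌊min_Q ⟨u, ·⟩⌋. -/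
open Set Pointwise

/- For every integral `u` that is nonnegative on `σ`, the minima of `⟨u, ·⟩` on `Q` and
on each `Qᵢ` are attained, and `∑ᵢ ⌊min_{Qᵢ} ⟨u, ·⟩⌋ = ⌊min_Q ⟨u, ·⟩⌋`. -/
namespace SFMAux

variable {V : Type*} [AddCommGroup V] [Module ℝ V]

theorem zero_mem_coneHull (S : Set V) : (0 : V) ∈ coneHull S :=
  ⟨0, Fin.elim0, Fin.elim0, fun i => i.elim0, fun i => i.elim0, by simp⟩

theorem sum_mem_coneHull {ι : Type*} (S : Set V) (A : Finset ι) (c : ι → ℝ) (v : ι → V)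
    (hc : ∀ i ∈ A, 0 ≤ c i) (hv : ∀ i ∈ A, v i ∈ S) :
    (∑ i ∈ A, c i • v i) ∈ coneHull S := by
  classical
  refine ⟨A.card, fun j => c (A.equivFin.symm j), fun j => v (A.equivFin.symm j),
    fun j => hc _ (A.equivFin.symm j).2, fun j => hv _ (A.equivFin.symm j).2, ?_⟩
  rw [← Finset.sum_attach A (fun i => c i • v i)]
  rw [← Finset.univ_eq_attach]
  exact Fintype.sum_equiv A.equivFin _ _ (fun i => by simp)

theorem fiber_sum {ι : Type*} [DecidableEq V] (A : Finset ι) (T : Finset V) (v : ι → V)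
    (hv : ∀ i ∈ A, v i ∈ T) (c : ι → ℝ) :
    ∑ y ∈ T, (∑ i ∈ A.filter (fun i => v i = y), c i) • y = ∑ i ∈ A, c i • v i := by
  rw [← Finset.sum_fiberwise_of_maps_to hv (fun i => c i • v i)]
  refine Finset.sum_congr rfl fun y _ => ?_
  rw [Finset.sum_smul]
  refine Finset.sum_congr rfl fun i hi => ?_
  rw [(Finset.mem_filter.mp hi).2]

theorem mem_coneHull_finset_iff [DecidableEq V] (T : Finset V) (x : V) :
    x ∈ coneHull (T : Set V) ↔ ∃ w : V → ℝ, (∀ y ∈ T, 0 ≤ w y) ∧ x = ∑ y ∈ T, w y • y := by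
  constructor
  · rintro ⟨m, c, v, hc, hv, rfl⟩
    refine ⟨fun y => ∑ i ∈ Finset.univ.filter (fun i => v i = y), c i,
      fun y _ => Finset.sum_nonneg fun i _ => hc i, ?_⟩
    rw [fiber_sum Finset.univ T v (fun i _ => hv i) c]
  · rintro ⟨w, hw, rfl⟩
    exact sum_mem_coneHull _ T w id hw (fun y hy => Finset.mem_coe.mpr hy)

theorem coneHull_smul_mem (S : Set V) {a : ℝ} (ha : 0 ≤ a) {x : V} (hx : x ∈ coneHull S) :
    a • x ∈ coneHull S := by
  obtain ⟨m, c, v, hc, hv, rfl⟩ := hx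
  refine ⟨m, fun i => a * c i, v, fun i => mul_nonneg ha (hc i), hv, ?_⟩
  rw [Finset.smul_sum]
  exact Finset.sum_congr rfl fun i _ => by rw [smul_smul]


theorem coneHull_add_mem (S : Set V) {x y : V} (hx : x ∈ coneHull S) (hy : y ∈ coneHull S) :
    x + y ∈ coneHull S := by
  obtain ⟨m, c, v, hc, hv, rfl⟩ := hx
  obtain ⟨m', c', v', hc', hv', rfl⟩ := hy
  have := sum_mem_coneHull S (Finset.univ : Finset (Fin m ⊕ Fin m')) (Sum.elim c c')
    (Sum.elim v v') (by rintro (i|i) _ <;> [exact hc i; exact hc' i])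
    (by rintro (i|i) _ <;> [exact hv i; exact hv' i])
  simpa [Fintype.sum_sum_type] using this

theorem coneHull_convex (S : Set V) : Convex ℝ (coneHull S) :=
  fun _ hx _ hy _ _ ha hb _ =>
    coneHull_add_mem S (coneHull_smul_mem S ha hx) (coneHull_smul_mem S hb hy)

theorem coneHull_mono {S S' : Set V} (h : S ⊆ S') : coneHull S ⊆ coneHull S' := by
  rintro x ⟨m, c, v, hc, hv, rfl⟩; exact ⟨m, c, v, hc, fun i => h (hv i), rfl⟩

theorem subset_coneHull (S : Set V) : S ⊆ coneHull S := fun x hx =>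
  ⟨1, fun _ => 1, fun _ => x, fun _ => zero_le_one, fun _ => hx, by simp⟩

theorem dot_add {m : ℕ} (u x y : Fin m → ℝ) : dot u (x + y) = dot u x + dot u y := by
  simp [dot, mul_add, Finset.sum_add_distrib]

theorem dot_smul {m : ℕ} (u : Fin m → ℝ) (a : ℝ) (x : Fin m → ℝ) :
    dot u (a • x) = a * dot u x := by
  simp only [dot, Pi.smul_apply, smul_eq_mul, Finset.mul_sum]
  exact Finset.sum_congr rfl fun j _ => by ring

theorem dot_sum {m : ℕ} (u : Fin m → ℝ) {ι : Type*} (A : Finset ι) (f : ι → Fin m → ℝ) :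
    dot u (∑ i ∈ A, f i) = ∑ i ∈ A, dot u (f i) := by
  simp only [dot, Finset.sum_apply, Finset.mul_sum]
  exact Finset.sum_comm

theorem dot_isLinearMap {m : ℕ} (u : Fin m → ℝ) : IsLinearMap ℝ (dot u) :=
  ⟨dot_add u, fun a x => by rw [dot_smul, smul_eq_mul]⟩

theorem dot_nonneg_coneHull {N : ℕ} (u : Fin N → ℝ) (S : Set (Fin N → ℝ))
    (h : ∀ s ∈ S, 0 ≤ dot u s) {x} (hx : x ∈ coneHull S) : 0 ≤ dot u x := by
  obtain ⟨m, c, v, hc, hv, rfl⟩ := hx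
  rw [dot_sum]
  exact Finset.sum_nonneg fun i _ => by
    rw [dot_smul]; exact mul_nonneg (hc i) (h _ (hv i))


theorem coneHull_caratheodory {ι : Type*} [DecidableEq V] (S : Set V) (A : Finset ι) :
    ∀ (c : ι → ℝ) (v : ι → V), (∀ i ∈ A, 0 ≤ c i) → (∀ i ∈ A, v i ∈ S) →
    ∃ T : Finset V, (T : Set V) ⊆ S ∧ LinearIndependent ℝ (fun x : (T : Set V) => (x : V)) ∧
      (∑ i ∈ A, c i • v i) ∈ coneHull (T : Set V) := by
  classical
  induction A using Finset.strongInduction with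
  | _ A ih =>
  intro c v hc hv
  by_cases hind : LinearIndependent ℝ (fun i : {x // x ∈ A} => v i)
  · refine ⟨A.image v, ?_, ?_, ?_⟩
    · intro y hy
      obtain ⟨i, hi, rfl⟩ := Finset.mem_image.mp (Finset.mem_coe.mp hy)
      exact hv i hi
    · have hinj : Set.InjOn v (A : Set ι) := by
        intro i hi j hj hij
        exact Subtype.mk_eq_mk.mp (hind.injective (a₁ := ⟨i, hi⟩) (a₂ := ⟨j, hj⟩)
          (by simpa using hij))
      rw [Finset.coe_image]
      exact (linearIndepOn_iff_image hinj).mp hind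
    · rw [mem_coneHull_finset_iff]
      refine ⟨fun y => ∑ i ∈ A.filter (fun i => v i = y), c i,
        fun y _ => Finset.sum_nonneg fun i hi => hc i (Finset.mem_filter.mp hi).1, ?_⟩
      rw [fiber_sum A (A.image v) v (fun i hi => Finset.mem_image_of_mem v hi) c]
  · obtain ⟨g, hgsum, j₀, hgj₀⟩ := Fintype.not_linearIndependent_iff.mp hind
    set d : ι → ℝ := fun i => if h : i ∈ A then g ⟨i, h⟩ else 0 with hd
    have hdsum : ∑ i ∈ A, d i • v i = 0 := by
      rw [← Finset.sum_attach A (fun i => d i • v i)]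
      rw [← hgsum, ← Finset.univ_eq_attach]
      exact Finset.sum_congr rfl fun i _ => by simp [hd, i.2]
    have hdj : ∃ i₀ ∈ A, d i₀ ≠ 0 := ⟨j₀, j₀.2, by simp [hd, j₀.2]; exact hgj₀⟩
    -- get a combination with a positive coefficient
    obtain ⟨e, hesum, i₁, hi₁A, hi₁pos⟩ :
        ∃ e : ι → ℝ, (∑ i ∈ A, e i • v i = 0) ∧ ∃ i₁ ∈ A, 0 < e i₁ := by
      obtain ⟨i₀, hi₀A, hi₀⟩ := hdj
      rcases lt_or_gt_of_ne hi₀ with hneg | hpos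
      · refine ⟨fun i => -d i, ?_, i₀, hi₀A, by show 0 < -d i₀; linarith⟩
        simp only [neg_smul]
        rw [Finset.sum_neg_distrib, hdsum, neg_zero]
      · exact ⟨d, hdsum, i₀, hi₀A, hpos⟩
    set B := A.filter (fun i => 0 < e i) with hB
    have hBne : B.Nonempty := ⟨i₁, Finset.mem_filter.mpr ⟨hi₁A, hi₁pos⟩⟩
    set t := B.inf' hBne (fun i => c i / e i) with ht
    have ht0 : 0 ≤ t := by
      apply Finset.le_inf'
      intro b hb
      have hbA := (Finset.mem_filter.mp hb).1
      exact div_nonneg (hc b hbA) (le_of_lt (Finset.mem_filter.mp hb).2)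
    obtain ⟨i₂, hi₂B, hi₂eq⟩ := Finset.exists_mem_eq_inf' hBne (fun i => c i / e i)
    have hi₂A : i₂ ∈ A := (Finset.mem_filter.mp hi₂B).1
    have hi₂pos : 0 < e i₂ := (Finset.mem_filter.mp hi₂B).2
    set c' : ι → ℝ := fun i => c i - t * e i with hc'
    have hc'0 : ∀ i ∈ A, 0 ≤ c' i := by
      intro i hiA
      by_cases hie : 0 < e i
      · have hit : t ≤ c i / e i := Finset.inf'_le _ (Finset.mem_filter.mpr ⟨hiA, hie⟩)
        have := (le_div_iff₀ hie).mp hit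
        simp only [hc']; linarith
      · have : t * e i ≤ 0 := mul_nonpos_of_nonneg_of_nonpos ht0 (le_of_not_gt hie)
        have := hc i hiA
        simp only [hc']; linarith
    have hsum' : ∑ i ∈ A, c' i • v i = ∑ i ∈ A, c i • v i := by
      simp only [hc', sub_smul]
      rw [Finset.sum_sub_distrib]
      have : ∑ i ∈ A, (t * e i) • v i = t • ∑ i ∈ A, e i • v i := by
        rw [Finset.smul_sum]
        exact Finset.sum_congr rfl fun i _ => by rw [smul_smul]
      rw [this, hesum, smul_zero, sub_zero]
    have hc'i₂ : c' i₂ = 0 := by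
      have hteq : t = c i₂ / e i₂ := hi₂eq
      simp only [hc', hteq]
      rw [div_mul_cancel₀ _ (ne_of_gt hi₂pos), sub_self]
    have herase : ∑ i ∈ A.erase i₂, c' i • v i = ∑ i ∈ A, c i • v i := by
      rw [← hsum', ← Finset.add_sum_erase A (fun i => c' i • v i) hi₂A, hc'i₂, zero_smul,
        zero_add]
    obtain ⟨T, hTS, hTind, hTmem⟩ := ih (A.erase i₂) (Finset.erase_ssubset hi₂A) c' v
      (fun i hi => hc'0 i (Finset.mem_of_mem_erase hi))
      (fun i hi => hv i (Finset.mem_of_mem_erase hi))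
    exact ⟨T, hTS, hTind, herase ▸ hTmem⟩


theorem isClosed_coneHull_of_linearIndependent {N : ℕ} (T : Finset (Fin N → ℝ))
    (h : LinearIndependent ℝ (fun x : (T : Set (Fin N → ℝ)) => (x : Fin N → ℝ))) :
    IsClosed (coneHull (T : Set (Fin N → ℝ))) := by
  classical
  set f : (↥(T : Set (Fin N → ℝ)) → ℝ) →ₗ[ℝ] (Fin N → ℝ) :=
    Fintype.linearCombination ℝ (fun y : (T : Set (Fin N → ℝ)) => (y : Fin N → ℝ)) with hf
  have hker : LinearMap.ker f = ⊥ := by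
    rw [LinearMap.ker_eq_bot']
    intro g hg
    have hfg : f g = ∑ i : ↥(T : Set (Fin N → ℝ)), g i • (i : Fin N → ℝ) := rfl
    have := Fintype.linearIndependent_iff.mp h g (by rw [← hfg]; exact hg)
    funext i; exact this i
  have himg : coneHull (T : Set (Fin N → ℝ)) = f '' {g | ∀ y, 0 ≤ g y} := by
    ext x
    constructor
    · intro hx
      obtain ⟨w, hw, rfl⟩ := (mem_coneHull_finset_iff T x).mp hx
      refine ⟨fun y => w (y : Fin N → ℝ), fun y => hw _ (Finset.mem_coe.mp y.2), ?_⟩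
      exact Finset.sum_coe_sort T (fun y => w y • y)
    · rintro ⟨g, hg, rfl⟩
      have := sum_mem_coneHull (T : Set (Fin N → ℝ))
        (Finset.univ : Finset ↥(T : Set (Fin N → ℝ))) g (fun y => (y : Fin N → ℝ))
        (fun i _ => hg i) (fun i _ => i.2)
      exact this
  rw [himg]
  have hclosed : IsClosed {g : ↥(T : Set (Fin N → ℝ)) → ℝ | ∀ y, 0 ≤ g y} := by
    have : {g : ↥(T : Set (Fin N → ℝ)) → ℝ | ∀ y, 0 ≤ g y} =
        ⋂ y, {g | 0 ≤ g y} := by ext g; simp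
    rw [this]
    exact isClosed_iInter fun y => isClosed_le continuous_const (continuous_apply y)
  exact ((LinearMap.isClosedEmbedding_of_injective hker).isClosedMap) _ hclosed

theorem isClosed_coneHull {N : ℕ} (T : Finset (Fin N → ℝ)) :
    IsClosed (coneHull (T : Set (Fin N → ℝ))) := by
  classical
  set 𝒯 : Set (Finset (Fin N → ℝ)) :=
    {T' | T' ⊆ T ∧ LinearIndependent ℝ (fun x : (T' : Set (Fin N → ℝ)) => (x : Fin N → ℝ))}
    with h𝒯
  have hfin : 𝒯.Finite := Set.Finite.subset (T.powerset : Finset _).finite_toSet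
    (fun T' hT' => Finset.mem_coe.mpr (Finset.mem_powerset.mpr hT'.1))
  have hunion : coneHull (T : Set (Fin N → ℝ)) = ⋃ T' ∈ 𝒯, coneHull (T' : Set (Fin N → ℝ)) := by
    apply Set.Subset.antisymm
    · rintro x ⟨m, c, v, hc, hv, rfl⟩
      obtain ⟨T₂, hT₂S, hT₂ind, hT₂mem⟩ := coneHull_caratheodory (T : Set (Fin N → ℝ))
        Finset.univ c v (fun i _ => hc i) (fun i _ => hv i)
      exact Set.mem_biUnion (⟨fun y hy => Finset.mem_coe.mp (hT₂S (Finset.mem_coe.mpr hy)),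
        hT₂ind⟩ : T₂ ∈ 𝒯) hT₂mem
    · exact Set.iUnion₂_subset fun T' hT' => coneHull_mono (Finset.coe_subset.mpr hT'.1)
  rw [hunion]
  exact hfin.isClosed_biUnion fun T' hT' => isClosed_coneHull_of_linearIndependent T' hT'.2

theorem mem_coneHull_of_ray {N : ℕ} (T : Finset (Fin N → ℝ)) (x d : Fin N → ℝ)
    (h : ∀ t : ℝ, 0 ≤ t → x + t • d ∈ coneHull (T : Set (Fin N → ℝ))) :
    d ∈ coneHull (T : Set (Fin N → ℝ)) := by
  have hmem : ∀ m : ℕ, ((m : ℝ) + 1)⁻¹ • x + d ∈ coneHull (T : Set (Fin N → ℝ)) := by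
    intro m
    have hpos : (0 : ℝ) < (m : ℝ) + 1 := by positivity
    have := coneHull_smul_mem (T : Set (Fin N → ℝ)) (le_of_lt (inv_pos.mpr hpos))
      (h ((m : ℝ) + 1) (le_of_lt hpos))
    have heq : (((m : ℝ) + 1)⁻¹ : ℝ) • (x + ((m : ℝ) + 1) • d) = ((m : ℝ) + 1)⁻¹ • x + d := by
      rw [smul_add, smul_smul, inv_mul_cancel₀ (ne_of_gt hpos), one_smul]
    rwa [heq] at this
  have htend : Filter.Tendsto (fun m : ℕ => ((m : ℝ) + 1)⁻¹ • x + d) Filter.atTop (nhds d) := by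
    have h1 : Filter.Tendsto (fun m : ℕ => ((m : ℝ) + 1)⁻¹) Filter.atTop (nhds 0) := by
      simpa using tendsto_one_div_add_atTop_nhds_zero_nat (𝕜 := ℝ)
    have h2 := h1.smul_const x
    rw [zero_smul] at h2
    simpa using h2.add_const d
  exact (isClosed_coneHull T).mem_of_tendsto htend (Filter.Eventually.of_forall hmem)


/-- A strictly positive functional on a pointed finitely generated cone. -/
theorem exists_strict_functional {N : ℕ} (S₀ : Finset (Fin N → ℝ)) (σ : Set (Fin N → ℝ))
    (hσ : σ = coneHull (S₀ : Set (Fin N → ℝ))) (hsc : σ ∩ (-σ) = {0}) :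
    ∃ u₀ : Fin N → ℝ, (∀ x ∈ σ, 0 ≤ dot u₀ x) ∧ ∀ x ∈ σ, x ≠ 0 → 0 < dot u₀ x := by
  classical
  by_cases hS' : (S₀.erase 0).Nonempty
  · set K : Set (Fin N → ℝ) := convexHull ℝ ((S₀.erase 0 : Finset (Fin N → ℝ)) : Set (Fin N → ℝ))
      with hK
    have h0K : (0 : Fin N → ℝ) ∉ K := by
      intro h0
      rw [hK, Finset.convexHull_eq] at h0
      obtain ⟨w, hw0, hw1, hwc⟩ := h0
      rw [Finset.centerMass_eq_of_sum_1 _ _ hw1] at hwc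
      simp only [id] at hwc
      have hy₀ : ∃ y₀ ∈ S₀.erase 0, 0 < w y₀ := by
        by_contra hcon
        push_neg at hcon
        have : ∑ y ∈ S₀.erase 0, w y = 0 :=
          Finset.sum_eq_zero fun y hy => le_antisymm (hcon y hy) (hw0 y hy)
        rw [hw1] at this; exact one_ne_zero this
      obtain ⟨y₀, hy₀mem, hy₀pos⟩ := hy₀
      have hy₀S : y₀ ∈ S₀ := Finset.mem_of_mem_erase hy₀mem
      have hy₀ne : y₀ ≠ 0 := Finset.ne_of_mem_erase hy₀mem
      have hsplit : w y₀ • y₀ + ∑ y ∈ (S₀.erase 0).erase y₀, w y • y = 0 := by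
        rw [Finset.add_sum_erase (S₀.erase 0) (fun y => w y • y) hy₀mem]; exact hwc
      have hmem1 : w y₀ • y₀ ∈ σ := by
        rw [hσ]
        exact coneHull_smul_mem _ (le_of_lt hy₀pos) (subset_coneHull _ hy₀S)
      have hmem2 : w y₀ • y₀ ∈ -σ := by
        rw [Set.mem_neg, hσ]
        have : -(w y₀ • y₀) = ∑ y ∈ (S₀.erase 0).erase y₀, w y • y := by
          rw [neg_eq_iff_add_eq_zero, add_comm] at *
          exact hsplit
        rw [this]
        exact sum_mem_coneHull _ _ _ _
          (fun y hy => hw0 y (Finset.mem_of_mem_erase hy))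
          (fun y hy => Finset.mem_of_mem_erase (Finset.mem_of_mem_erase hy))
      have : w y₀ • y₀ = 0 := by
        have := Set.mem_inter hmem1 hmem2
        rw [hsc] at this
        exact this
      rcases smul_eq_zero.mp this with h | h
      · exact (ne_of_gt hy₀pos) h
      · exact hy₀ne h
    obtain ⟨f, c, hfc, hfK⟩ := geometric_hahn_banach_point_closed
      (convex_convexHull ℝ _) ((Set.Finite.isCompact_convexHull ℝ
        (S₀.erase 0).finite_toSet).isClosed) h0K
    have hc0 : 0 < c := by simpa using hfc
    set u₀ : Fin N → ℝ := fun j => f (Pi.single j 1) with hu₀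
    have hsingle : ∀ j : Fin N, (fun i => if j = i then (1 : ℝ) else 0) = Pi.single j 1 := by
      intro j; ext i; simp [Pi.single_apply, eq_comm]
    have hdot : ∀ x : Fin N → ℝ, dot u₀ x = f x := by
      intro x
      conv_rhs => rw [pi_eq_sum_univ x]
      rw [map_sum]
      refine Finset.sum_congr rfl fun j _ => ?_
      rw [map_smul, smul_eq_mul, hsingle j]
      show f (Pi.single j 1) * x j = x j * f (Pi.single j 1)
      ring
    have hfpos : ∀ y ∈ S₀, y ≠ 0 → c ≤ f y := fun y hy hyne =>
      le_of_lt (hfK y (subset_convexHull ℝ _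
        (Finset.mem_coe.mpr (Finset.mem_erase.mpr ⟨hyne, hy⟩))))
    have hterm : ∀ (cc : ℝ) (y : Fin N → ℝ), 0 ≤ cc → y ∈ S₀ → 0 ≤ dot u₀ (cc • y) := by
      intro cc y hcc hy
      rw [dot_smul]
      refine mul_nonneg hcc ?_
      rw [hdot]
      by_cases hyne : y = 0
      · rw [hyne, map_zero]
      · linarith [hfpos y hy hyne]
    refine ⟨u₀, ?_, ?_⟩
    · intro x hx
      rw [hσ] at hx
      obtain ⟨m, cc, v, hcc, hv, rfl⟩ := hx
      rw [dot_sum]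
      exact Finset.sum_nonneg fun i _ => hterm (cc i) (v i) (hcc i) (hv i)
    · intro x hx hxne
      rw [hσ] at hx
      obtain ⟨m, cc, v, hcc, hv, rfl⟩ := hx
      rw [dot_sum]
      have hex : ∃ i, cc i • v i ≠ 0 := by
        by_contra hcon; push_neg at hcon
        exact hxne (Finset.sum_eq_zero fun i _ => hcon i)
      obtain ⟨i₀, hi₀⟩ := hex
      have hcc₀ : cc i₀ ≠ 0 := fun h => hi₀ (by rw [h, zero_smul])
      have hv₀ : v i₀ ≠ 0 := fun h => hi₀ (by rw [h, smul_zero])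
      refine Finset.sum_pos' (fun i _ => hterm (cc i) (v i) (hcc i) (hv i)) ⟨i₀,
        Finset.mem_univ i₀, ?_⟩
      rw [dot_smul, hdot]
      exact mul_pos (lt_of_le_of_ne (hcc i₀) (Ne.symm hcc₀))
        (lt_of_lt_of_le hc0 (hfpos (v i₀) (hv i₀) hv₀))
  · -- degenerate case : σ = {0}
    refine ⟨0, ?_, ?_⟩
    · intro x hx
      have : dot (0 : Fin N → ℝ) x = 0 := by simp [dot]
      rw [this]
    · intro x hx hxne
      exfalso
      apply hxne
      rw [hσ] at hx
      obtain ⟨m, cc, v, hcc, hv, rfl⟩ := hx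
      have hall : ∀ i, v i = 0 := by
        intro i
        have := hv i
        by_contra hne
        exact hS' ⟨v i, Finset.mem_erase.mpr ⟨hne, this⟩⟩
      refine Finset.sum_eq_zero fun i _ => by rw [hall i, smul_zero]


theorem mem_finsetSum_sets {ι : Type*} [DecidableEq ι] (A : Finset ι) (f : ι → Set V) (x : V) :
    x ∈ ∑ i ∈ A, f i ↔ ∃ g : ι → V, (∀ i ∈ A, g i ∈ f i) ∧ x = ∑ i ∈ A, g i := by
  induction A using Finset.induction_on generalizing x with
  | empty =>
    simp only [Finset.sum_empty]
    constructor
    · intro hx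
      exact ⟨fun _ => 0, fun i hi => absurd hi (Finset.notMem_empty i), by simpa using hx⟩
    · rintro ⟨g, -, rfl⟩
      simp
  | insert _ _ hnot ih =>
    rename_i a s
    rw [Finset.sum_insert hnot]
    constructor
    · intro hx
      obtain ⟨y, hy, z, hz, rfl⟩ := Set.mem_add.mp hx
      obtain ⟨g, hg, rfl⟩ := (ih z).mp hz
      refine ⟨Function.update g a y, fun i hi => ?_, ?_⟩
      · rcases Finset.mem_insert.mp hi with rfl | hi
        · rw [Function.update_self]; exact hy
        · rw [Function.update_of_ne (fun h : i = a => hnot (by rwa [h] at hi))]; exact hg i hi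
      · rw [Finset.sum_insert hnot, Function.update_self]
        congr 1
        exact (Finset.sum_congr rfl fun i hi =>
          Function.update_of_ne (fun h : i = a => hnot (by rwa [h] at hi)) _ _).symm
    · rintro ⟨g, hg, rfl⟩
      rw [Finset.sum_insert hnot]
      exact Set.add_mem_add (hg a (Finset.mem_insert_self a s))
        ((ih _).mpr ⟨g, fun i hi => hg i (Finset.mem_insert_of_mem hi), rfl⟩)

theorem finite_finsetSum_sets {ι : Type*} (A : Finset ι) (f : ι → Set V)
    (hf : ∀ i ∈ A, (f i).Finite) : (∑ i ∈ A, f i).Finite := by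
  classical
  induction A using Finset.induction_on with
  | empty => simp only [Finset.sum_empty]; exact Set.finite_zero
  | insert _ _ hnot ih =>
    rename_i a s
    rw [Finset.sum_insert hnot]
    exact Set.Finite.add (hf a (Finset.mem_insert_self a s))
      (ih fun i hi => hf i (Finset.mem_insert_of_mem hi))

theorem convexHull_finsetSum {ι : Type*} (A : Finset ι) (f : ι → Set V) :
    (convexHull ℝ (∑ i ∈ A, f i) : Set V) = ∑ i ∈ A, convexHull ℝ (f i) := by
  classical
  induction A using Finset.induction_on with
  | empty =>
    simp only [Finset.sum_empty]
    rw [show (0 : Set V) = {0} from rfl, convexHull_singleton]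
  | insert _ _ hnot ih =>
    rename_i a s
    rw [Finset.sum_insert hnot, Finset.sum_insert hnot, convexHull_add, ih]

theorem inf'_le_dot_of_mem_convexHull {N : ℕ} (u : Fin N → ℝ) (W : Finset (Fin N → ℝ))
    (hW : W.Nonempty) {x : Fin N → ℝ} (hx : x ∈ convexHull ℝ (W : Set (Fin N → ℝ))) :
    W.inf' hW (fun y => dot u y) ≤ dot u x := by
  have hconv : Convex ℝ {y : Fin N → ℝ | W.inf' hW (fun y => dot u y) ≤ dot u y} :=
    convex_halfSpace_ge (dot_isLinearMap u) _
  have hsub : (W : Set (Fin N → ℝ)) ⊆ {y | W.inf' hW (fun y => dot u y) ≤ dot u y} :=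
    fun y hy => show _ ≤ dot u y from Finset.inf'_le _ (Finset.mem_coe.mp hy)
  exact convexHull_min hsub hconv hx

theorem dot_eq_of_mem_convexHull {N : ℕ} (u : Fin N → ℝ) (W : Finset (Fin N → ℝ)) (μ : ℝ)
    (hval : ∀ y ∈ W, dot u y = μ) {x : Fin N → ℝ}
    (hx : x ∈ convexHull ℝ (W : Set (Fin N → ℝ))) : dot u x = μ := by
  have hconv : Convex ℝ {y : Fin N → ℝ | dot u y = μ} :=
    convex_hyperplane (dot_isLinearMap u) μ
  exact convexHull_min (fun y hy => hval y (Finset.mem_coe.mp hy)) hconv hx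

theorem mem_convexHull_filter {N : ℕ} [DecidableEq (Fin N → ℝ)] (u : Fin N → ℝ)
    (W : Finset (Fin N → ℝ)) (μ : ℝ) (hmin : ∀ y ∈ W, μ ≤ dot u y) {x : Fin N → ℝ}
    (hx : x ∈ convexHull ℝ (W : Set (Fin N → ℝ))) (hxμ : dot u x = μ) :
    x ∈ convexHull ℝ ((W.filter (fun y => dot u y = μ) : Finset (Fin N → ℝ)) :
      Set (Fin N → ℝ)) := by
  rw [Finset.convexHull_eq] at hx
  obtain ⟨w, hw0, hw1, hwc⟩ := hx
  rw [Finset.centerMass_eq_of_sum_1 _ _ hw1] at hwc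
  simp only [id] at hwc
  have hdotx : ∑ y ∈ W, w y * dot u y = μ := by
    rw [← hxμ, ← hwc, dot_sum]
    exact Finset.sum_congr rfl fun y _ => (dot_smul u (w y) y).symm
  have hzero : ∀ y ∈ W, w y * (dot u y - μ) = 0 := by
    have hsum0 : ∑ y ∈ W, w y * (dot u y - μ) = 0 := by
      simp only [mul_sub]
      rw [Finset.sum_sub_distrib, hdotx, ← Finset.sum_mul, hw1, one_mul, sub_self]
    intro y hy
    exact (Finset.sum_eq_zero_iff_of_nonneg fun y hy =>
      mul_nonneg (hw0 y hy) (by linarith [hmin y hy])).mp hsum0 y hy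
  have hwvanish : ∀ y ∈ W, dot u y ≠ μ → w y = 0 := by
    intro y hy hne
    rcases mul_eq_zero.mp (hzero y hy) with h | h
    · exact h
    · exact absurd (by linarith : dot u y = μ) hne
  have hsumfilter : ∑ y ∈ W.filter (fun y => dot u y = μ), w y = 1 := by
    rw [← hw1]
    exact Finset.sum_filter_of_ne fun y hy hne => by
      by_contra hc; exact hne (hwvanish y hy hc)
  have hcmfilter : ∑ y ∈ W.filter (fun y => dot u y = μ), w y • y = x := by
    rw [← hwc]
    exact Finset.sum_filter_of_ne fun y hy hne => by
      by_contra hc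
      exact hne (by rw [hwvanish y hy hc, zero_smul])
  have := Finset.centerMass_mem_convexHull (W.filter (fun y => dot u y = μ))
    (fun y hy => hw0 y (Finset.mem_of_mem_filter y hy)) (by rw [hsumfilter]; norm_num)
    (fun y hy => Finset.mem_coe.mpr hy)
  rw [Finset.centerMass_eq_of_sum_1 _ (fun y => y) hsumfilter] at this
  rwa [hcmfilter] at this

theorem extremePoint_of_face {N : ℕ} (A : Set (Fin N → ℝ)) (u : Fin N → ℝ) (m : ℝ)
    (hlb : ∀ y ∈ A, m ≤ dot u y) {x : Fin N → ℝ}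
    (hx : x ∈ Set.extremePoints ℝ (A ∩ {y | dot u y = m})) :
    x ∈ Set.extremePoints ℝ A := by
  obtain ⟨⟨hxA, hxm⟩, hface⟩ := hx
  refine ⟨hxA, fun y hy z hz hseg => ?_⟩
  obtain ⟨a, b, ha, hb, hab, habx⟩ := hseg
  have hdx : a * dot u y + b * dot u z = m := by
    rw [← hxm, ← habx, dot_add, dot_smul, dot_smul]
  have habm : a * m + b * m = m := by rw [← add_mul, hab, one_mul]
  have hym : dot u y = m := by
    by_contra hne
    have h1 : m < dot u y := lt_of_le_of_ne (hlb y hy) (Ne.symm hne)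
    have h2 : a * m < a * dot u y := mul_lt_mul_of_pos_left h1 ha
    have h3 : b * m ≤ b * dot u z := mul_le_mul_of_nonneg_left (hlb z hz) hb.le
    linarith
  have hzm : dot u z = m := by
    by_contra hne
    have h1 : m < dot u z := lt_of_le_of_ne (hlb z hz) (Ne.symm hne)
    have h2 : b * m < b * dot u z := mul_lt_mul_of_pos_left h1 hb
    have h3 : a * m ≤ a * dot u y := mul_le_mul_of_nonneg_left (hlb y hy) ha.le
    linarith
  exact hface ⟨hy, hym⟩ ⟨hz, hzm⟩ ⟨a, b, ha, hb, hab, habx⟩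

theorem dot_integral {N : ℕ} {u v : Fin N → ℝ} (hu : ∀ j, ∃ z : ℤ, u j = (z : ℝ))
    (hv : ∀ j, ∃ z : ℤ, v j = (z : ℝ)) : ∃ z : ℤ, dot u v = (z : ℝ) := by
  classical
  choose zu hzu using hu
  choose zv hzv using hv
  refine ⟨∑ j, zu j * zv j, ?_⟩
  rw [dot]
  push_cast
  exact Finset.sum_congr rfl fun j _ => by rw [hzu j, hzv j]

theorem sum_floor_eq_floor_sum {m : ℕ} (μ : Fin m → ℝ)
    (h : ({i | ¬ ∃ z : ℤ, μ i = (z : ℝ)} : Set (Fin m)).Subsingleton) :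
    ∑ i, ⌊μ i⌋ = ⌊∑ i, μ i⌋ := by
  classical
  by_cases hall : ∀ i, ∃ z : ℤ, μ i = (z : ℝ)
  · choose z hz using hall
    have h1 : ∑ i, μ i = ((∑ i, z i : ℤ) : ℝ) := by
      push_cast
      exact Finset.sum_congr rfl fun i _ => hz i
    rw [h1, Int.floor_intCast]
    exact Finset.sum_congr rfl fun i _ => by rw [hz i, Int.floor_intCast]
  · push_neg at hall
    obtain ⟨i₀, hi₀⟩ := hall
    have hothers : ∀ i, i ≠ i₀ → ∃ z : ℤ, μ i = (z : ℝ) := by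
      intro i hi
      by_contra hc
      have hi₀' : ¬ ∃ z : ℤ, μ i₀ = (z : ℝ) := by push_neg; exact hi₀
      exact hi (h hc hi₀')
    set g : Fin m → ℤ := fun i => if hi : i ≠ i₀ then Classical.choose (hothers i hi) else 0
      with hg
    have hgval : ∀ i ∈ Finset.univ.erase i₀, μ i = (g i : ℝ) := by
      intro i hi
      have hine : i ≠ i₀ := Finset.ne_of_mem_erase hi
      simp only [hg, dif_pos hine]
      exact Classical.choose_spec (hothers i hine)
    have hsplit : ∑ i, μ i = μ i₀ + ((∑ i ∈ Finset.univ.erase i₀, g i : ℤ) : ℝ) := by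
      rw [← Finset.add_sum_erase Finset.univ μ (Finset.mem_univ i₀)]
      push_cast
      rw [Finset.sum_congr rfl hgval]
    rw [hsplit, Int.floor_add_intCast]
    rw [← Finset.add_sum_erase Finset.univ (fun i => ⌊μ i⌋) (Finset.mem_univ i₀)]
    congr 1
    exact Finset.sum_congr rfl fun i hi => by rw [hgval i hi, Int.floor_intCast]

end SFMAux

open SFMAux in
/-- For every integral `u` that is nonnegative on `σ`, the minima of `⟨u, ·⟩` on `Q` and
on each `Qᵢ` are attained, and `∑ᵢ ⌊min_{Qᵢ} ⟨u, ·⟩⌋ = ⌊min_Q ⟨u, ·⟩⌋`. -/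
theorem sum_floor_min_eq_floor_min (n k : ℕ) (hk : 1 ≤ k) (D : DeformationDatum n k)
    (u : Fin n → ℝ) (hu : IsIntegralVec u) (hupos : ∀ x ∈ D.σ, 0 ≤ dot u x) :
    ∃ (μ : ℝ) (μi : Fin (k + 1) → ℝ),
      IsLeast ((fun x => dot u x) '' D.Q) μ ∧
      (∀ i, IsLeast ((fun x => dot u x) '' D.Qi i) (μi i)) ∧
      ∑ i, ⌊μi i⌋ = ⌊μ⌋ := by
  classical
  obtain ⟨S₀, hS₀, σ, hσ, hspan, hsc, w, hw, V, R, hVne, hVQ, hRQ, Qi, hQi, hVext, Q, h1, h2, h3, h4', h5, h6⟩ := D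
  show ∃ (μ : ℝ) (μi : Fin (k + 1) → ℝ),
      IsLeast ((fun x => dot u x) '' Q) μ ∧
      (∀ i, IsLeast ((fun x => dot u x) '' Qi i) (μi i)) ∧
      ∑ i, ⌊μi i⌋ = ⌊μ⌋

  -- ray lemma for σ
  have hσray : ∀ (x d : Fin n → ℝ), (∀ t : ℝ, 0 ≤ t → x + t • d ∈ σ) → d ∈ σ := by
    intro x d hxd
    rw [hσ] at hxd ⊢
    exact mem_coneHull_of_ray S₀ x d hxd
  -- basic membership facts
  have hconvQi : ∀ i, ∀ x ∈ convexHull ℝ (V i : Set (Fin n → ℝ)), x ∈ Qi i := by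
    intro i x hx
    rw [hQi i]
    have := Set.add_mem_add hx (zero_mem_coneHull (R i : Set (Fin n → ℝ)))
    simpa using this
  have hQiV : ∀ i, ∀ v ∈ V i, v ∈ Qi i := fun i v hv =>
    hconvQi i v (subset_convexHull ℝ _ (Finset.mem_coe.mpr hv))
  have hQmem : ∀ g : Fin (k + 1) → (Fin n → ℝ), (∀ i, g i ∈ Qi i) → (∑ i, g i) ∈ Q := by
    intro g hg
    rw [h3]
    exact (mem_finsetSum_sets Finset.univ Qi _).mpr ⟨g, fun i _ => hg i, rfl⟩
  have hQmem' : ∀ x ∈ Q, ∃ g : Fin (k + 1) → (Fin n → ℝ), (∀ i, g i ∈ Qi i) ∧ x = ∑ i, g i := by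
    intro x hx
    rw [h3] at hx
    obtain ⟨g, hg, rfl⟩ := (mem_finsetSum_sets Finset.univ Qi x).mp hx
    exact ⟨g, fun i => hg i (Finset.mem_univ i), rfl⟩
  -- recession directions
  have hQiplus : ∀ i, ∀ x ∈ Qi i, ∀ s ∈ coneHull (R i : Set (Fin n → ℝ)), x + s ∈ Qi i := by
    intro i x hx s hs
    rw [hQi i] at hx ⊢
    obtain ⟨c, hc, sm, hsm, rfl⟩ := Set.mem_add.mp hx
    exact Set.mem_add.mpr ⟨c, hc, sm + s, coneHull_add_mem _ hsm hs, (add_assoc _ _ _).symm⟩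
  have hQplus : ∀ i, ∀ x ∈ Q, ∀ s ∈ coneHull (R i : Set (Fin n → ℝ)), x + s ∈ Q := by
    intro i x hx s hs
    obtain ⟨g, hg, rfl⟩ := hQmem' x hx
    have heq : (∑ j, g j) + s = ∑ j, Function.update g i (g i + s) j := by
      rw [Finset.sum_update_of_mem (Finset.mem_univ i), Finset.sdiff_singleton_eq_erase,
        ← Finset.add_sum_erase Finset.univ g (Finset.mem_univ i)]
      abel
    rw [heq]
    apply hQmem
    intro j
    by_cases hj : j = i
    · subst hj; rw [Function.update_self]; exact hQiplus j _ (hg j) s hs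
    · rw [Function.update_of_ne hj]; exact hg j
  have hQine : ∀ i, (Qi i).Nonempty := fun i => ⟨(hVne i).choose, hQiV i _ (hVne i).choose_spec⟩
  choose q hq using hQine
  have hq₀Q : (∑ i, q i) ∈ Q := hQmem q hq
  have hRσ : ∀ i, coneHull (R i : Set (Fin n → ℝ)) ⊆ σ := by
    intro i s hs
    apply hσray (∑ i, q i) s
    intro t ht
    exact h1 (hQplus i _ hq₀Q (t • s) (coneHull_smul_mem _ ht hs))
  obtain ⟨u₀, hu₀nonneg, hu₀pos⟩ := exists_strict_functional S₀ σ hσ hsc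
  -- the minima
  set μi : Fin (k + 1) → ℝ := fun i => (V i).inf' (hVne i) (fun y => dot u y) with hμidef
  choose xi hxiV hxieq using fun i => Finset.exists_mem_eq_inf' (hVne i) (fun y => dot u y)
  have hμi_least : ∀ i, IsLeast ((fun x => dot u x) '' Qi i) (μi i) := by
    intro i
    constructor
    · exact ⟨xi i, hQiV i _ (hxiV i), (hxieq i).symm⟩
    · rintro b ⟨y, hy, rfl⟩
      rw [hQi i] at hy
      obtain ⟨c, hc, sm, hsm, rfl⟩ := Set.mem_add.mp hy
      have hle1 := inf'_le_dot_of_mem_convexHull u (V i) (hVne i) hc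
      have hle2 : 0 ≤ dot u sm := hupos sm (hRσ i hsm)
      show μi i ≤ dot u (c + sm)
      rw [dot_add]
      exact le_add_of_le_of_nonneg hle1 hle2
  set μ : ℝ := ∑ i, μi i with hμdef
  have hμ_least : IsLeast ((fun x => dot u x) '' Q) μ := by
    constructor
    · refine ⟨∑ i, xi i, hQmem xi (fun i => hQiV i _ (hxiV i)), ?_⟩
      show dot u (∑ i, xi i) = μ
      rw [dot_sum]
      exact Finset.sum_congr rfl fun i _ => (hxieq i).symm
    · rintro b ⟨y, hy, rfl⟩
      obtain ⟨g, hg, rfl⟩ := hQmem' y hy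
      show μ ≤ dot u (∑ i, g i)
      rw [dot_sum]
      exact Finset.sum_le_sum fun i _ => (hμi_least i).2 ⟨g i, hg i, rfl⟩
  -- second-stage vertices
  set Vi' : Fin (k + 1) → Finset (Fin n → ℝ) :=
    fun i => (V i).filter (fun y => dot u y = μi i) with hVi'def
  have hVi'ne : ∀ i, (Vi' i).Nonempty :=
    fun i => ⟨xi i, Finset.mem_filter.mpr ⟨hxiV i, (hxieq i).symm⟩⟩
  set νi : Fin (k + 1) → ℝ := fun i => (Vi' i).inf' (hVi'ne i) (fun y => dot u₀ y) with hνidef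
  choose yi hyiV hyieq using fun i => Finset.exists_mem_eq_inf' (hVi'ne i) (fun y => dot u₀ y)
  set Vi'' : Fin (k + 1) → Finset (Fin n → ℝ) :=
    fun i => (Vi' i).filter (fun y => dot u₀ y = νi i) with hVi''def
  have hVi''ne : ∀ i, (Vi'' i).Nonempty :=
    fun i => ⟨yi i, Finset.mem_filter.mpr ⟨hyiV i, (hyieq i).symm⟩⟩
  set ν : ℝ := ∑ i, νi i with hνdef
  -- decomposition of points in the u-minimal face of Qi
  have hdecomp : ∀ i x, x ∈ Qi i → dot u x = μi i →
      ∃ c, c ∈ convexHull ℝ ((Vi' i : Finset (Fin n → ℝ)) : Set (Fin n → ℝ)) ∧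
        ∃ sm, sm ∈ coneHull (R i : Set (Fin n → ℝ)) ∧ dot u sm = 0 ∧ x = c + sm := by
    intro i x hx hxμ
    rw [hQi i] at hx
    obtain ⟨c, hc, sm, hsm, rfl⟩ := Set.mem_add.mp hx
    have hle1 := inf'_le_dot_of_mem_convexHull u (V i) (hVne i) hc
    have hle2 : 0 ≤ dot u sm := hupos sm (hRσ i hsm)
    rw [dot_add] at hxμ
    have hceq : dot u c = μi i := by linarith
    have hsmeq : dot u sm = 0 := by linarith
    refine ⟨c, ?_, sm, hsm, hsmeq, rfl⟩
    exact mem_convexHull_filter u (V i) (μi i)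
      (fun y hy => Finset.inf'_le _ hy) hc hceq
  have hFi_lb : ∀ i x, x ∈ Qi i → dot u x = μi i → νi i ≤ dot u₀ x := by
    intro i x hx hxμ
    obtain ⟨c, hc, sm, hsm, hsm0, rfl⟩ := hdecomp i x hx hxμ
    have hle1 := inf'_le_dot_of_mem_convexHull u₀ (Vi' i) (hVi'ne i) hc
    have hle2 : 0 ≤ dot u₀ sm := hu₀nonneg sm (hRσ i hsm)
    rw [dot_add]
    exact le_add_of_le_of_nonneg hle1 hle2
  -- the minimal face of Qi i for (u, u₀) is exactly the polytope conv(Vi'')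
  have hface_eq : ∀ i x, (x ∈ Qi i ∧ dot u x = μi i ∧ dot u₀ x = νi i) ↔
      x ∈ convexHull ℝ ((Vi'' i : Finset (Fin n → ℝ)) : Set (Fin n → ℝ)) := by
    intro i x
    constructor
    · rintro ⟨hx, hxμ, hxν⟩
      obtain ⟨c, hc, sm, hsm, hsm0, rfl⟩ := hdecomp i x hx hxμ
      have hle1 := inf'_le_dot_of_mem_convexHull u₀ (Vi' i) (hVi'ne i) hc
      have hle2 : 0 ≤ dot u₀ sm := hu₀nonneg sm (hRσ i hsm)
      rw [dot_add] at hxν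
      have hceq : dot u₀ c = νi i := by linarith
      have hsmeq : dot u₀ sm = 0 := by linarith
      have hsm_zero : sm = 0 := by
        by_contra hne
        exact absurd hsmeq (ne_of_gt (hu₀pos sm (hRσ i hsm) hne))
      rw [hsm_zero, add_zero]
      exact mem_convexHull_filter u₀ (Vi' i) (νi i)
        (fun y hy => Finset.inf'_le _ hy) hc hceq
    · intro hx
      have hsub : (Vi'' i : Set (Fin n → ℝ)) ⊆ (V i : Set (Fin n → ℝ)) := by
        intro y hy
        exact Finset.mem_coe.mpr (Finset.mem_of_mem_filter y
          (Finset.mem_of_mem_filter y (Finset.mem_coe.mp hy)))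
      refine ⟨hconvQi i x (convexHull_mono hsub hx), ?_, ?_⟩
      · exact dot_eq_of_mem_convexHull u (Vi'' i) (μi i)
          (fun y hy => (Finset.mem_filter.mp (Finset.mem_of_mem_filter y hy)).2) hx
      · exact dot_eq_of_mem_convexHull u₀ (Vi'' i) (νi i)
          (fun y hy => (Finset.mem_filter.mp hy).2) hx
  -- splitting equalities across the Minkowski sum
  have split_eq : ∀ (g : Fin (k + 1) → Fin n → ℝ), (∀ i, g i ∈ Qi i) →
      dot u (∑ i, g i) = μ → ∀ i, dot u (g i) = μi i := by
    intro g hg hsum i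
    have hle : ∀ j ∈ Finset.univ, μi j ≤ dot u (g j) :=
      fun j _ => (hμi_least j).2 ⟨g j, hg j, rfl⟩
    have heq : ∑ j, μi j = ∑ j, dot u (g j) := by rw [← dot_sum, hsum]
    exact (((Finset.sum_eq_sum_iff_of_le hle).mp heq) i (Finset.mem_univ i)).symm
  have split_eq₀ : ∀ (g : Fin (k + 1) → Fin n → ℝ),
      (∀ i, g i ∈ Qi i ∧ dot u (g i) = μi i) →
      dot u₀ (∑ i, g i) = ν → ∀ i, dot u₀ (g i) = νi i := by
    intro g hg hsum i
    have hle : ∀ j ∈ Finset.univ, νi j ≤ dot u₀ (g j) :=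
      fun j _ => hFi_lb j (g j) (hg j).1 (hg j).2
    have heq : ∑ j, νi j = ∑ j, dot u₀ (g j) := by rw [← dot_sum, hsum]
    exact (((Finset.sum_eq_sum_iff_of_le hle).mp heq) i (Finset.mem_univ i)).symm
  -- the polytope P
  set P : Set (Fin n → ℝ) := ∑ i, (convexHull ℝ ((Vi'' i : Finset (Fin n → ℝ)) :
    Set (Fin n → ℝ)) : Set (Fin n → ℝ)) with hPdef
  have hPne : P.Nonempty := by
    refine ⟨∑ i, yi i, ?_⟩
    rw [hPdef]
    exact (mem_finsetSum_sets Finset.univ _ _).mpr ⟨yi, fun i _ =>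
      subset_convexHull ℝ _ (Finset.mem_coe.mpr (Finset.mem_filter.mpr
        ⟨hyiV i, (hyieq i).symm⟩)), rfl⟩
  have hPcompact : IsCompact P := by
    rw [hPdef, ← convexHull_finsetSum]
    exact Set.Finite.isCompact_convexHull ℝ (finite_finsetSum_sets Finset.univ _
      (fun i _ => (Vi'' i).finite_toSet))
  obtain ⟨e, he⟩ := hPcompact.extremePoints_nonempty hPne
  -- P is the doubly-minimal face of Q
  have hPface : P = (Q ∩ {y | dot u y = μ}) ∩ {y | dot u₀ y = ν} := by
    apply Set.Subset.antisymm
    · intro x hx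
      rw [hPdef] at hx
      obtain ⟨g, hg, rfl⟩ := (mem_finsetSum_sets Finset.univ _ x).mp hx
      have hgi : ∀ i, g i ∈ Qi i ∧ dot u (g i) = μi i ∧ dot u₀ (g i) = νi i :=
        fun i => (hface_eq i (g i)).mpr (hg i (Finset.mem_univ i))
      refine ⟨⟨hQmem g (fun i => (hgi i).1), ?_⟩, ?_⟩
      · show dot u (∑ i, g i) = μ
        rw [dot_sum]
        exact Finset.sum_congr rfl fun i _ => (hgi i).2.1
      · show dot u₀ (∑ i, g i) = ν
        rw [dot_sum]
        exact Finset.sum_congr rfl fun i _ => (hgi i).2.2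
    · rintro x ⟨⟨hxQ, hxμ⟩, hxν⟩
      obtain ⟨g, hg, rfl⟩ := hQmem' x hxQ
      have hgu : ∀ i, dot u (g i) = μi i := split_eq g hg hxμ
      have hgu₀ : ∀ i, dot u₀ (g i) = νi i := split_eq₀ g (fun i => ⟨hg i, hgu i⟩) hxν
      rw [hPdef]
      exact (mem_finsetSum_sets Finset.univ _ _).mpr ⟨g, fun i _ =>
        (hface_eq i (g i)).mp ⟨hg i, hgu i, hgu₀ i⟩, rfl⟩
  -- lower bound for u₀ on the u-minimal face of Q
  have hA₂lb : ∀ y ∈ Q ∩ {y | dot u y = μ}, ν ≤ dot u₀ y := by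
    rintro y ⟨hyQ, hyμ⟩
    obtain ⟨g, hg, rfl⟩ := hQmem' y hyQ
    have hgu : ∀ i, dot u (g i) = μi i := split_eq g hg hyμ
    rw [dot_sum]
    exact Finset.sum_le_sum fun i _ => hFi_lb i (g i) (hg i) (hgu i)
  -- lift e to an extreme point of Q
  have he₂ : e ∈ Set.extremePoints ℝ (Q ∩ {y | dot u y = μ}) := by
    apply extremePoint_of_face _ u₀ ν hA₂lb
    rw [← hPface]
    exact he
  have heQ : e ∈ Set.extremePoints ℝ Q := by
    apply extremePoint_of_face Q u μ (fun y hy => hμ_least.2 ⟨y, hy, rfl⟩)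
    exact he₂
  have hedot : dot u e = μ := (extremePoints_subset he₂).2
  -- apply (iv')
  obtain ⟨vi, hviext, hesum, hvisub⟩ := h4' e heQ
  have hviQ : ∀ i, vi i ∈ Qi i := fun i => extremePoints_subset (hviext i)
  have hviμ : ∀ i, dot u (vi i) = μi i := by
    apply split_eq vi hviQ
    rw [← hesum]
    exact hedot
  -- integrality transfer
  have hμiint : ({i | ¬ ∃ z : ℤ, μi i = (z : ℝ)} : Set (Fin (k + 1))).Subsingleton := by
    apply Set.Subsingleton.anti hvisub
    intro i hi
    intro hint
    apply hi
    rw [← hviμ i]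
    exact dot_integral hu hint
  exact ⟨μ, μi, hμ_least, hμi_least, sum_floor_eq_floor_sum μi hμiint⟩
end
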